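/- arXiv:2006.06659 — 10 statements merged into one kernel-verified Lean document; each statement's English description precedes it below -/
import Mathlib

section
/- Let d ≥ 3, let H be a d×d positive semidefinite Hermitian complex matrix whose smallest eigenvalue equals 0 (a 'grounded Hamiltonian'), let E > 0, and let W be an arbitrary d×d complex matrix. Then the infimum of |Tr(ρW)| over all density matrices ρ (d×d positive semidefinite Hermitian with Tr ρ = 1) satisfying Tr(ρH) ≤ E equals the infimum of |⟨ψ, Wψ⟩| over all unit vectors ψ ∈ ℂ^d satisfying ⟨ψ, Hψ⟩ ≤ E. -/
/-!
Write a density matrix as `ρ = ∑ λᵢ uᵢ uᵢᴴ` with orthonormal eigenvectors `uᵢ`. Then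
`(Re Tr (ρ H), Tr (ρ W))` is a convex combination of the points `(Re ⟨uᵢ, H uᵢ⟩, ⟨uᵢ, W uᵢ⟩)`, so it
suffices that the set of `(h, w)` with `Re ⟨ψ, H ψ⟩ ≤ h` and `⟨ψ, W ψ⟩ = w` for some unit vector `ψ`
is convex. Two unit vectors lie in the range of an isometry `ℂ² → ℂᵈ`, which reduces this to `d = 2`.
There `⟨φ, M φ⟩` is an affine function of the Bloch vector of `φ`, and the Bloch vectors of unit
vectors fill the unit sphere of `ℝ³`. From a point `r` of the Bloch ball, follow a nonzero direction
in the kernel of the (real-linear) `W`-part, oriented so that the real `H`-part does not increase: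
the ray leaves the ball at a unit vector with the same `W`-value and no larger `H`-value. Hence the
two sets whose infima are compared are equal.
-/

open Matrix Complex ComplexConjugate
open scoped ComplexOrder

theorem exists_nonneg_norm_add_smul_eq {E : Type*} [NormedAddCommGroup E] [NormedSpace ℝ E]
    {p u : E} {R : ℝ} (hu : u ≠ 0) (hp : ‖p‖ ≤ R) : ∃ t : ℝ, 0 ≤ t ∧ ‖p + t • u‖ = R := by
  set T := (R + ‖p‖) / ‖u‖
  have hT : 0 ≤ T := div_nonneg (by linarith [norm_nonneg p]) (norm_nonneg u)
  have hfar : R ≤ ‖p + T • u‖ := by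
    have hTu : T * ‖u‖ = R + ‖p‖ := div_mul_cancel₀ _ (norm_ne_zero_iff.mpr hu)
    calc R = ‖T • u‖ - ‖p‖ := by rw [norm_smul, Real.norm_of_nonneg hT, hTu]; ring
      _ ≤ ‖p + T • u‖ := by simpa [add_comm] using norm_sub_norm_le (T • u) (-p)
  obtain ⟨t, ht, hpt⟩ := intermediate_value_Icc hT
    (by fun_prop : Continuous fun t : ℝ => ‖p + t • u‖).continuousOn ⟨by simpa using hp, hfar⟩
  exact ⟨t, ht.1, hpt⟩

namespace Matrix

variable {n m α : Type*} [Fintype n] [Fintype m]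

theorem trace_vecMulVec_mul [CommSemiring α] (v w : n → α) (A : Matrix n n α) :
    (vecMulVec v w * A).trace = w ⬝ᵥ (A *ᵥ v) := by
  rw [vecMulVec_mul, trace_vecMulVec, dotProduct_comm, dotProduct_mulVec]

theorem star_mulVec_dotProduct_mulVec_mulVec [CommSemiring α] [StarRing α]
    (V : Matrix n m α) (A : Matrix n n α) (φ : m → α) :
    star (V *ᵥ φ) ⬝ᵥ (A *ᵥ (V *ᵥ φ)) = star φ ⬝ᵥ ((Vᴴ * A * V) *ᵥ φ) := by
  rw [star_mulVec, ← dotProduct_mulVec, mulVec_mulVec, mulVec_mulVec, Matrix.mul_assoc]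

theorem star_mulVec_dotProduct_mulVec [CommSemiring α] [StarRing α]
    (V : Matrix n m α) (φ : m → α) :
    star (V *ᵥ φ) ⬝ᵥ (V *ᵥ φ) = star φ ⬝ᵥ ((Vᴴ * V) *ᵥ φ) := by
  rw [star_mulVec, ← dotProduct_mulVec, mulVec_mulVec]

theorem star_smul_dotProduct_mulVec_smul [CommSemiring α] [StarRing α]
    (A : Matrix n n α) (c : α) (ψ : n → α) :
    star (c • ψ) ⬝ᵥ (A *ᵥ (c • ψ)) = (star c * c) * (star ψ ⬝ᵥ (A *ᵥ ψ)) := by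
  simp only [star_smul, mulVec_smul, smul_dotProduct, dotProduct_smul, smul_eq_mul]
  ring

theorem IsHermitian.eq_sum_eigenvalues_smul_vecMulVec {𝕜 : Type*} [RCLike 𝕜] [DecidableEq n]
    {A : Matrix n n 𝕜} (hA : A.IsHermitian) :
    A = ∑ i, (hA.eigenvalues i : 𝕜) •
      vecMulVec ⇑(hA.eigenvectorBasis i) (star ⇑(hA.eigenvectorBasis i)) := by
  conv_lhs => rw [hA.spectral_theorem, Unitary.conjStarAlgAut_apply]
  ext j k
  rw [Matrix.mul_apply]
  simp only [mul_diagonal, eigenvectorUnitary_apply, Function.comp_apply, star_apply,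
    RCLike.star_def, sum_apply, smul_apply, vecMulVec_apply, Pi.star_apply]
  exact Finset.sum_congr rfl fun i _ => by ring

end Matrix

theorem exists_isometry_fin_two_mulVec_eq {n : Type*} [Fintype n] {ψ₁ ψ₂ : n → ℂ}
    (h₁ : star ψ₁ ⬝ᵥ ψ₁ = 1) (h₂ : ψ₂ - (star ψ₁ ⬝ᵥ ψ₂) • ψ₁ ≠ 0) :
    ∃ V : Matrix n (Fin 2) ℂ, Vᴴ * V = 1 ∧ ∃ φ₁ φ₂ : Fin 2 → ℂ, V *ᵥ φ₁ = ψ₁ ∧ V *ᵥ φ₂ = ψ₂ := by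
  set c := star ψ₁ ⬝ᵥ ψ₂
  set u := ψ₂ - c • ψ₁
  have hu : star ψ₁ ⬝ᵥ u = 0 := by simp [u, dotProduct_sub, h₁, c]
  have hupos := Complex.pos_iff.mp (dotProduct_star_self_pos_iff.mpr h₂)
  set s := √(star u ⬝ᵥ u).re
  have hs : 0 < s := Real.sqrt_pos.mpr hupos.1
  have hus : star u ⬝ᵥ u = (s : ℂ) ^ 2 := by
    rw [← ofReal_pow, Real.sq_sqrt hupos.1.le]
    exact Complex.ext rfl hupos.2.symm
  set e := (s⁻¹ : ℂ) • u
  have h1e : star ψ₁ ⬝ᵥ e = 0 := by simp [e, hu]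
  have he1 : star e ⬝ᵥ ψ₁ = 0 := by rw [star_dotProduct, h1e, star_zero]
  have hee : star e ⬝ᵥ e = 1 := by
    simp only [e, star_smul, smul_dotProduct, dotProduct_smul, hus, star_inv₀, RCLike.star_def,
      conj_ofReal, smul_eq_mul]
    field_simp
  set V : Matrix n (Fin 2) ℂ := of fun k j => ![ψ₁, e] j k
  have hV (φ : Fin 2 → ℂ) : V *ᵥ φ = φ 0 • ψ₁ + φ 1 • e := by
    ext k
    simp [V, mulVec, dotProduct, Fin.sum_univ_two, mul_comm]
  refine ⟨V, ?_, ![1, 0], ![c, s], by simp [hV], by simp [hV, e, smul_smul, hs.ne', u]⟩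
  ext i j
  change star (![ψ₁, e] i) ⬝ᵥ ![ψ₁, e] j = _
  fin_cases i <;> fin_cases j <;> simp [h₁, h1e, he1, hee]

noncomputable def blochVector (φ : Fin 2 → ℂ) : EuclideanSpace ℝ (Fin 3) :=
  !₂[2 * (conj (φ 0) * φ 1).re, 2 * (conj (φ 0) * φ 1).im, normSq (φ 0) - normSq (φ 1)]

/-- `Tr (σ M)` for the qubit density matrix `σ = (1 + r₀ X + r₁ Y + r₂ Z) / 2` with Bloch vector `r`
(`X`, `Y`, `Z` the Pauli matrices). -/
noncomputable def blochValue (M : Matrix (Fin 2) (Fin 2) ℂ) : EuclideanSpace ℝ (Fin 3) →ᵃ[ℝ] ℂ where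
  toFun r := (M 0 0 + M 1 1) / 2 + r 0 • ((M 0 1 + M 1 0) / 2) + r 1 • (I * (M 0 1 - M 1 0) / 2)
    + r 2 • ((M 0 0 - M 1 1) / 2)
  linear :=
    { toFun r := r 0 • ((M 0 1 + M 1 0) / 2) + r 1 • (I * (M 0 1 - M 1 0) / 2)
        + r 2 • ((M 0 0 - M 1 1) / 2)
      map_add' r s := by simp only [PiLp.add_apply, add_smul]; abel
      map_smul' c r := by
        simp only [PiLp.smul_apply, smul_eq_mul, mul_smul, RingHom.id_apply, smul_add] }
  map_vadd' r v := by
    simp only [vadd_eq_add, PiLp.add_apply, add_smul, LinearMap.coe_mk, AddHom.coe_mk]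
    abel

theorem star_dotProduct_self_fin_two (φ : Fin 2 → ℂ) :
    star φ ⬝ᵥ φ = ((normSq (φ 0) + normSq (φ 1) : ℝ) : ℂ) := by
  simp [dotProduct, Fin.sum_univ_two, normSq_eq_conj_mul_self]

theorem norm_blochVector {φ : Fin 2 → ℂ} (hφ : star φ ⬝ᵥ φ = 1) : ‖blochVector φ‖ = 1 := by
  rw [star_dotProduct_self_fin_two, ofReal_eq_one] at hφ
  have hsq : ‖blochVector φ‖ ^ 2 = (normSq (φ 0) + normSq (φ 1)) ^ 2 := by
    rw [EuclideanSpace.real_norm_sq_eq, Fin.sum_univ_three]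
    simp only [blochVector, mul_re, conj_re, conj_im, mul_im, normSq_apply, PiLp.toLp_apply,
      cons_val_zero, cons_val_one, cons_val]
    ring
  rw [hφ] at hsq
  exact (sq_eq_sq₀ (norm_nonneg _) zero_le_one).mp (by rw [hsq, one_pow])

theorem star_dotProduct_mulVec_eq_blochValue {φ : Fin 2 → ℂ} (hφ : star φ ⬝ᵥ φ = 1)
    (M : Matrix (Fin 2) (Fin 2) ℂ) : star φ ⬝ᵥ (M *ᵥ φ) = blochValue M (blochVector φ) := by
  rw [star_dotProduct_self_fin_two, normSq_apply, normSq_apply] at hφ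
  simp only [blochValue, blochVector, AffineMap.coe_mk, dotProduct, mulVec, Fin.sum_univ_two,
    Pi.star_apply, star_def, real_smul, cons_val_zero, cons_val_one, cons_val,
    mul_re, conj_re, conj_im, mul_im, normSq_apply]
  push_cast
  conv_lhs => rw [← re_add_im (φ 0), ← re_add_im (φ 1)]
  simp only [map_add, map_mul, conj_ofReal, conj_I]
  push_cast at hφ
  linear_combination (M 0 0 + M 1 1) / 2 * hφ
    - ((φ 0).im * (φ 1).im * (M 0 1 + M 1 0) + (φ 0).im ^ 2 * M 0 0 + (φ 1).im ^ 2 * M 1 1) * I_sq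

theorem exists_blochVector_eq {r : EuclideanSpace ℝ (Fin 3)} (hr : ‖r‖ = 1) :
    ∃ φ : Fin 2 → ℂ, star φ ⬝ᵥ φ = 1 ∧ blochVector φ = r := by
  have hr2 : r 0 ^ 2 + r 1 ^ 2 + r 2 ^ 2 = 1 := by
    simpa [Fin.sum_univ_three, hr] using (EuclideanSpace.real_norm_sq_eq r).symm
  suffices ∃ α β : ℂ, normSq α + normSq β = 1 ∧ normSq α - normSq β = r 2 ∧
      conj α * β = ⟨r 0 / 2, r 1 / 2⟩ by
    obtain ⟨α, β, hsum, hdiff, hprod⟩ := this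
    refine ⟨![α, β], by rw [star_dotProduct_self_fin_two]; simp [hsum], ?_⟩
    ext i
    fin_cases i <;> simp [blochVector, hdiff, hprod, mul_div_cancel₀]
  rcases (show -1 ≤ r 2 by nlinarith).eq_or_lt with hz | hz
  · have h0 : r 0 = 0 := by nlinarith
    have h1 : r 1 = 0 := by nlinarith
    exact ⟨0, 1, by simp, by simp [← hz], by simp [h0, h1, Complex.ext_iff]⟩
  · set a := √((1 + r 2) / 2)
    have ha : 0 < a := Real.sqrt_pos.mpr (by linarith)
    have ha2 : a ^ 2 = (1 + r 2) / 2 := Real.sq_sqrt (by linarith)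
    have hα : normSq a = (1 + r 2) / 2 := by rw [normSq_ofReal, ← sq, ha2]
    have hβ : normSq (⟨r 0 / 2, r 1 / 2⟩ / a) = (1 - r 2) / 2 := by
      rw [normSq_div, hα, normSq_mk]
      field_simp
      rw [div_eq_iff (by linarith)]
      linear_combination hr2
    refine ⟨a, ⟨r 0 / 2, r 1 / 2⟩ / a, by rw [hα, hβ]; ring, by rw [hα, hβ]; ring, ?_⟩
    rw [conj_ofReal, mul_div_cancel₀ _ (ofReal_ne_zero.mpr ha.ne')]

def upperJointNumericalRange {n : Type*} [Fintype n] (H W : Matrix n n ℂ) : Set (ℝ × ℂ) :=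
  {z | ∃ ψ : n → ℂ, star ψ ⬝ᵥ ψ = 1 ∧ (star ψ ⬝ᵥ (H *ᵥ ψ)).re ≤ z.1 ∧ star ψ ⬝ᵥ (W *ᵥ ψ) = z.2}

theorem exists_ne_zero_blochValue_linear_eq_zero (A B : Matrix (Fin 2) (Fin 2) ℂ) :
    ∃ u, u ≠ 0 ∧ ((blochValue A).linear u).re ≤ 0 ∧ (blochValue B).linear u = 0 := by
  obtain ⟨u, hu, hu0⟩ := Submodule.ne_bot_iff _ |>.mp <|
    LinearMap.ker_ne_bot_of_finrank_lt (f := (blochValue B).linear) <| by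
      rw [Complex.finrank_real_complex, finrank_euclideanSpace_fin]; norm_num
  rw [LinearMap.mem_ker] at hu
  rcases le_total ((blochValue A).linear u).re 0 with hA | hA
  · exact ⟨u, hu0, hA, hu⟩
  · exact ⟨-u, neg_ne_zero.mpr hu0, by simpa using hA, by simp [hu]⟩

theorem blochValue_mem_upperJointNumericalRange (A B : Matrix (Fin 2) (Fin 2) ℂ)
    {r : EuclideanSpace ℝ (Fin 3)} (hr : ‖r‖ ≤ 1) :
    ((blochValue A r).re, blochValue B r) ∈ upperJointNumericalRange A B := by
  obtain ⟨u, hu0, hAu, hBu⟩ := exists_ne_zero_blochValue_linear_eq_zero A B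
  obtain ⟨t, ht, hrt⟩ := exists_nonneg_norm_add_smul_eq hu0 hr
  obtain ⟨φ, hφ, hφr⟩ := exists_blochVector_eq hrt
  have hvalue (M : Matrix (Fin 2) (Fin 2) ℂ) :
      star φ ⬝ᵥ (M *ᵥ φ) = blochValue M r + t • (blochValue M).linear u := by
    rw [star_dotProduct_mulVec_eq_blochValue hφ, hφr, add_comm, ← vadd_eq_add,
      AffineMap.map_vadd, map_smul, vadd_eq_add, add_comm]
  refine ⟨φ, hφ, ?_, ?_⟩
  · rw [hvalue, add_re, real_smul, re_ofReal_mul]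
    nlinarith
  · rw [hvalue, hBu, smul_zero, add_zero]

theorem convex_upperJointNumericalRange_fin_two (A B : Matrix (Fin 2) (Fin 2) ℂ) :
    Convex ℝ (upperJointNumericalRange A B) := by
  rintro ⟨h₁, w₁⟩ ⟨φ₁, hφ₁, hA₁, hB₁⟩ ⟨h₂, w₂⟩ ⟨φ₂, hφ₂, hA₂, hB₂⟩ a b ha hb hab
  have hr : ‖a • blochVector φ₁ + b • blochVector φ₂‖ ≤ 1 := by
    simpa using convex_closedBall (0 : EuclideanSpace ℝ (Fin 3)) 1
      (by simp [norm_blochVector hφ₁]) (by simp [norm_blochVector hφ₂]) ha hb hab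
  obtain ⟨φ, hφ, hA, hB⟩ := blochValue_mem_upperJointNumericalRange A B hr
  rw [star_dotProduct_mulVec_eq_blochValue hφ₁] at hA₁ hB₁
  rw [star_dotProduct_mulVec_eq_blochValue hφ₂] at hA₂ hB₂
  simp only [Convex.combo_affine_apply hab] at hA hB
  refine ⟨φ, hφ, hA.trans ?_, hB.trans ?_⟩
  · simp only [add_re, smul_re, Prod.fst_add, Prod.smul_fst, smul_eq_mul]
    gcongr
  · rw [hB₁, hB₂]
    rfl

section

variable {n : Type*} [Fintype n]

theorem upperJointNumericalRange_conj_subset {m : Type*} [Fintype m] [DecidableEq m]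
    {V : Matrix n m ℂ} (hV : Vᴴ * V = 1) (H W : Matrix n n ℂ) :
    upperJointNumericalRange (Vᴴ * H * V) (Vᴴ * W * V) ⊆ upperJointNumericalRange H W := by
  rintro z ⟨φ, hφ, hH, hW⟩
  refine ⟨V *ᵥ φ, ?_, ?_, ?_⟩
  · rwa [star_mulVec_dotProduct_mulVec, hV, one_mulVec]
  · rwa [star_mulVec_dotProduct_mulVec_mulVec]
  · rwa [star_mulVec_dotProduct_mulVec_mulVec]

theorem convex_upperJointNumericalRange (H W : Matrix n n ℂ) :
    Convex ℝ (upperJointNumericalRange H W) := by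
  rintro z₁ ⟨ψ₁, h₁, hH₁, hW₁⟩ z₂ ⟨ψ₂, h₂, hH₂, hW₂⟩ a b ha hb hab
  by_cases hpar : ψ₂ - (star ψ₁ ⬝ᵥ ψ₂) • ψ₁ = 0
  · obtain ⟨c, rfl⟩ : ∃ c : ℂ, ψ₂ = c • ψ₁ := ⟨_, sub_eq_zero.mp hpar⟩
    have hc : star c * c = 1 := by
      simpa [star_smul, smul_dotProduct, dotProduct_smul, h₁, mul_comm] using h₂
    simp only [star_smul_dotProduct_mulVec_smul, hc, one_mul] at hH₂ hW₂
    refine ⟨ψ₁, h₁, ?_, ?_⟩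
    · simp only [Prod.fst_add, Prod.smul_fst, smul_eq_mul]
      calc (star ψ₁ ⬝ᵥ (H *ᵥ ψ₁)).re
          = a * (star ψ₁ ⬝ᵥ (H *ᵥ ψ₁)).re + b * (star ψ₁ ⬝ᵥ (H *ᵥ ψ₁)).re := by
            rw [← add_mul, hab, one_mul]
        _ ≤ a * z₁.1 + b * z₂.1 := by gcongr
    · simp only [Prod.snd_add, Prod.smul_snd, ← hW₁, ← hW₂, ← add_smul, hab, one_smul]
  · obtain ⟨V, hV, φ₁, φ₂, rfl, rfl⟩ := exists_isometry_fin_two_mulVec_eq h₁ hpar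
    simp only [star_mulVec_dotProduct_mulVec, star_mulVec_dotProduct_mulVec_mulVec, hV,
      one_mulVec] at h₁ h₂ hH₁ hH₂ hW₁ hW₂
    exact upperJointNumericalRange_conj_subset hV H W <|
      convex_upperJointNumericalRange_fin_two _ _ ⟨φ₁, h₁, hH₁, hW₁⟩ ⟨φ₂, h₂, hH₂, hW₂⟩ ha hb hab

theorem Matrix.PosSemidef.trace_mul_mem_upperJointNumericalRange [DecidableEq n]
    {ρ : Matrix n n ℂ} (hρ : ρ.PosSemidef) (htr : ρ.trace = 1) (H W : Matrix n n ℂ) :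
    (((ρ * H).trace).re, (ρ * W).trace) ∈ upperJointNumericalRange H W := by
  set p := hρ.1.eigenvalues
  set u := fun i => ⇑(hρ.1.eigenvectorBasis i)
  have htrace (A : Matrix n n ℂ) :
      (ρ * A).trace = ∑ i, (p i : ℂ) * (star (u i) ⬝ᵥ (A *ᵥ u i)) := by
    conv_lhs => rw [hρ.1.eq_sum_eigenvalues_smul_vecMulVec]
    simp [Finset.sum_mul, trace_sum, trace_smul, trace_vecMulVec_mul, u, p]
  have hunit (i : n) : star (u i) ⬝ᵥ u i = 1 := by
    rw [dotProduct_comm, ← EuclideanSpace.inner_eq_star_dotProduct, inner_self_eq_norm_sq_to_K,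
      hρ.1.eigenvectorBasis.orthonormal.1 i]
    simp
  have hsum : ∑ i, p i = 1 := by
    have := hρ.1.trace_eq_sum_eigenvalues
    rw [htr] at this
    simpa [p] using congrArg Complex.re this.symm
  have hpoint : (((ρ * H).trace).re, (ρ * W).trace) =
      ∑ i, p i • ((star (u i) ⬝ᵥ (H *ᵥ u i)).re, star (u i) ⬝ᵥ (W *ᵥ u i)) := by
    rw [htrace, htrace]
    ext <;> simp [Prod.fst_sum, Prod.snd_sum, re_sum, real_smul]
  rw [hpoint]
  exact (convex_upperJointNumericalRange H W).sum_mem (fun i _ => hρ.eigenvalues_nonneg i) hsum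
    fun i _ => ⟨u i, hunit i, le_rfl, rfl⟩

end

theorem energy_constrained_inf_mixed_eq_inf_pure_general
    (d : ℕ)
    (H : Matrix (Fin d) (Fin d) ℂ)
    (E : ℝ)
    (W : Matrix (Fin d) (Fin d) ℂ) :
    sInf {x : ℝ | ∃ ρ : Matrix (Fin d) (Fin d) ℂ, ρ.PosSemidef ∧ (ρ.trace = 1) ∧
        ((ρ * H).trace).re ≤ E ∧ x = ‖(ρ * W).trace‖}
      = sInf {x : ℝ | ∃ ψ : Fin d → ℂ, (star ψ ⬝ᵥ ψ = 1) ∧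
        ((star ψ ⬝ᵥ (H *ᵥ ψ)).re ≤ E) ∧ x = ‖star ψ ⬝ᵥ (W *ᵥ ψ)‖} := by
  congr 1
  ext x
  constructor
  · rintro ⟨ρ, hρ, htr, hE, rfl⟩
    obtain ⟨ψ, hψ, hHψ, hWψ⟩ := hρ.trace_mul_mem_upperJointNumericalRange htr H W
    exact ⟨ψ, hψ, hHψ.trans hE, by rw [hWψ]⟩
  · rintro ⟨ψ, hψ, hE, rfl⟩
    refine ⟨vecMulVec ψ (star ψ), posSemidef_vecMulVec_self_star ψ, ?_, ?_, ?_⟩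
    · rwa [trace_vecMulVec, dotProduct_comm]
    · rwa [trace_vecMulVec_mul]
    · rw [trace_vecMulVec_mul]

/-- **Energy-constrained discrimination: pure states suffice (finite dimensions).**
For a `d × d` grounded Hamiltonian `H` (positive semidefinite with `0` an eigenvalue),
energy bound `E > 0`, and an arbitrary matrix `W`, the infimum of `|Tr (ρ W)|` over
density matrices `ρ` with `Tr (ρ H) ≤ E` equals the infimum of `|⟨ψ, W ψ⟩|` over unit
vectors `ψ` with `⟨ψ, H ψ⟩ ≤ E`. -/
theorem energy_constrained_inf_mixed_eq_inf_pure
    (d : ℕ) (hd : 3 ≤ d)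
    (H : Matrix (Fin d) (Fin d) ℂ) (hH : H.PosSemidef)
    (hground : ∃ v : Fin d → ℂ, v ≠ 0 ∧ H *ᵥ v = 0)
    (E : ℝ) (hE : 0 < E)
    (W : Matrix (Fin d) (Fin d) ℂ) :
    sInf {x : ℝ | ∃ ρ : Matrix (Fin d) (Fin d) ℂ, ρ.PosSemidef ∧ (ρ.trace = 1) ∧
        ((ρ * H).trace).re ≤ E ∧ x = ‖(ρ * W).trace‖}
      = sInf {x : ℝ | ∃ ψ : Fin d → ℂ, (star ψ ⬝ᵥ ψ = 1) ∧
        ((star ψ ⬝ᵥ (H *ᵥ ψ)).re ≤ E) ∧ x = ‖star ψ ⬝ᵥ (W *ᵥ ψ)‖} :=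
  energy_constrained_inf_mixed_eq_inf_pure_general d H E W
end

section
/- Let ℋ be a complex Hilbert space, let H and H' be bounded self-adjoint operators on ℋ, and let H₀ be a bounded positive self-adjoint operator on ℋ. Suppose there are constants α, β, γ, δ > 0 such that (i) ‖(H − H')ψ‖ ≤ α‖Hψ‖ + β‖ψ‖ for all ψ ∈ ℋ, and (ii) ⟨ψ, |H| ψ⟩ ≤ γ⟨ψ, H₀ψ⟩ + δ‖ψ‖² for all ψ ∈ ℋ, where |H| is the absolute value of H. Then for every t ≥ 0 and every unit vector ψ ∈ ℋ, ‖(exp(−itH) − exp(−itH'))ψ‖ ≤ 2·√( (γ⟨ψ, H₀ψ⟩ + δ)·α·t ) + β·t. -/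
/-!
Split `ψ = φ + χ` spectrally with respect to `H`, with `c = αt` setting the energy scale:
`φ = f(H) ψ` for the cutoff `f(y) = 2 / (2 + c|y|)` and `χ = (1 - f(H)) ψ`. Pointwise
`(c y f(y))² + (2 (1 - f(y)))² ≤ 2c|y|`, so the functional calculus gives
`(c‖Hφ‖)² + (2‖χ‖)² ≤ 2c ⟨ψ, |H| ψ⟩`, hence `c‖Hφ‖ + 2‖χ‖ ≤ 2√(c ⟨ψ, |H| ψ⟩)`.
On the low-energy part Duhamel's formula bounds the difference of the two evolutions by
`t (α‖Hφ‖ + β‖φ‖)`, since `e^{-isH}` is unitary and commutes with `H`; on the high-energy part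
the crude bound `2‖χ‖` suffices. Finally (ii) bounds `⟨ψ, |H| ψ⟩` by `γ⟨ψ, H₀ψ⟩ + δ`.
-/

open scoped InnerProductSpace
open Complex

theorem ContinuousLinearMap.re_inner_map_le_of_le {𝕜 E : Type*} [RCLike 𝕜] [NormedAddCommGroup E]
    [InnerProductSpace 𝕜 E] {A B : E →L[𝕜] E} (h : A ≤ B) (x : E) :
    RCLike.re ⟪x, A x⟫_𝕜 ≤ RCLike.re ⟪x, B x⟫_𝕜 := by
  simpa [inner_sub_right] using ((le_def A B).mp h).re_inner_nonneg_right x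

theorem add_le_two_mul_sqrt_of_sq_add_sq_le {a b e : ℝ} (h : a ^ 2 + b ^ 2 ≤ 2 * e) :
    a + b ≤ 2 * √e := by
  have := Real.le_sqrt_of_sq_le (x := (a + b) / 2) (y := e) (by nlinarith [sq_nonneg (a - b)])
  linarith

theorem exists_energy_cutoff {c : ℝ} (hc : 0 ≤ c) :
    ∃ f : ℝ → ℝ, Continuous f ∧ (∀ y, ‖f y‖ ≤ 1) ∧
      ∀ y, (c * (y * f y)) ^ 2 + (2 * (1 - f y)) ^ 2 ≤ 2 * c * |y| := by
  have hpos (y : ℝ) : 0 < 2 + c * |y| := by positivity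
  refine ⟨fun y ↦ 2 / (2 + c * |y|), continuous_const.div (by fun_prop) fun y ↦ (hpos y).ne',
    fun y ↦ ?_, fun y ↦ ?_⟩
  · rw [Real.norm_of_nonneg (div_nonneg zero_le_two (hpos y).le), div_le_one (hpos y)]
    linarith [mul_nonneg hc (abs_nonneg y)]
  · have hsum : (c * (y * (2 / (2 + c * |y|)))) ^ 2 + (2 * (1 - 2 / (2 + c * |y|))) ^ 2
        = 8 * (c * |y|) ^ 2 / (2 + c * |y|) ^ 2 := by
      field_simp
      rw [← sq_abs y]
      ring
    rw [hsum, div_le_iff₀ (by positivity)]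
    nlinarith [mul_nonneg (mul_nonneg hc (abs_nonneg y)) (sq_nonneg (2 - c * |y|))]

theorem IsSelfAdjoint.exp_smul_neg_I_smul_mem_unitary {A : Type*} [NormedRing A]
    [NormedAlgebra ℂ A] [CompleteSpace A] [StarRing A] [ContinuousStar A] [StarModule ℂ A]
    {a : A} (ha : IsSelfAdjoint a) (s : ℝ) :
    NormedSpace.exp (s • (-I) • a) ∈ unitary A := by
  let +nondep : NormedAlgebra ℚ A := .restrictScalars ℚ ℂ A
  exact NormedSpace.exp_mem_unitary_of_mem_skewAdjoint <|
    skewAdjoint.smul_mem s (ha.smul_mem_skewAdjoint (r := -I) (by simp [skewAdjoint.mem_iff]))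

theorem norm_exp_smul_sub_exp_smul_apply_le {E : Type*} [NormedAddCommGroup E]
    [NormedSpace ℂ E] [CompleteSpace E] {A B : E →L[ℂ] E}
    (hB : ∀ (s : ℝ) (x : E), ‖NormedSpace.exp (s • B) x‖ = ‖x‖) {t : ℝ} (ht : 0 ≤ t) (x : E)
    {C : ℝ} (hC : ∀ s : ℝ, ‖(A - B) (NormedSpace.exp (s • A) x)‖ ≤ C) :
    ‖(NormedSpace.exp (t • A) - NormedSpace.exp (t • B)) x‖ ≤ C * t := by
  -- `s ↦ e^{(t-s)B} e^{sA} x` runs from `e^{tB} x` to `e^{tA} x`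
  set g : ℝ → E := fun s ↦ (NormedSpace.exp ((t - s) • B) * NormedSpace.exp (s • A)) x
  have hg (s : ℝ) :
      HasDerivAt g (NormedSpace.exp ((t - s) • B) ((A - B) (NormedSpace.exp (s • A) x))) s := by
    have hB' := (hasDerivAt_exp_smul_const B (t - s)).scomp s ((hasDerivAt_id s).const_sub t)
    have hprod := hB'.mul (hasDerivAt_exp_smul_const' A s)
    convert ((ContinuousLinearMap.apply ℂ E x).restrictScalars ℝ).hasFDerivAt.comp_hasDerivAt s
      hprod using 1
    · rfl
    simp [sub_eq_neg_add]
  have hmvt := norm_image_sub_le_of_norm_deriv_le_segment' (fun s _ ↦ (hg s).hasDerivWithinAt)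
    (fun s _ ↦ (hB _ _).trans_le (hC s)) t ⟨ht, le_rfl⟩
  simpa [g] using hmvt

section SelfAdjoint

variable {ℋ : Type*} [NormedAddCommGroup ℋ] [InnerProductSpace ℂ ℋ] [CompleteSpace ℋ]
  {H : ℋ →L[ℂ] ℋ}

theorem IsSelfAdjoint.norm_exp_smul_neg_I_smul_apply (hH : IsSelfAdjoint H) (s : ℝ) (x : ℋ) :
    ‖NormedSpace.exp (s • (-I) • H) x‖ = ‖x‖ :=
  ContinuousLinearMap.norm_map_of_mem_unitary (hH.exp_smul_neg_I_smul_mem_unitary s) x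

theorem IsSelfAdjoint.norm_cfc_apply_sq (hH : IsSelfAdjoint H) {f : ℝ → ℝ}
    (hf : ContinuousOn f (spectrum ℝ H)) (x : ℋ) :
    ‖cfc f H x‖ ^ 2 = (⟪x, cfc (fun y ↦ f y ^ 2) H x⟫_ℂ).re := by
  rw [ContinuousLinearMap.apply_norm_sq_eq_inner_adjoint_right, cfc_pow f 2 H, pow_two,
    ← ContinuousLinearMap.star_eq_adjoint, (cfc_predicate f H).star_eq]
  rfl

theorem IsSelfAdjoint.exists_energy_split (hH : IsSelfAdjoint H) {c : ℝ} (hc : 0 ≤ c)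
    (ψ : ℋ) : ∃ φ χ : ℋ, ψ = φ + χ ∧ ‖φ‖ ≤ ‖ψ‖ ∧
      c * ‖H φ‖ + 2 * ‖χ‖ ≤ 2 * √(c * (⟪ψ, cfc (fun y : ℝ ↦ |y|) H ψ⟫_ℂ).re) := by
  obtain ⟨f, hf, hf_norm, hf_key⟩ := exists_energy_cutoff hc
  refine ⟨cfc f H ψ, ψ - cfc f H ψ, by abel, ?_, ?_⟩
  · simpa using (cfc f H).le_of_opNorm_le (norm_cfc_le zero_le_one fun y _ ↦ hf_norm y) ψ
  have hφ : c * ‖H (cfc f H ψ)‖ = ‖cfc (fun y ↦ c * (y * f y)) H ψ‖ := by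
    rw [cfc_const_mul .., cfc_mul .., cfc_id' ℝ H, smul_apply, mul_apply_eq_comp, norm_smul,
      Real.norm_of_nonneg hc]
  have hχ : 2 * ‖ψ - cfc f H ψ‖ = ‖cfc (fun y ↦ 2 * (1 - f y)) H ψ‖ := by
    rw [cfc_const_mul .., cfc_sub .., cfc_const_one ℝ H, smul_apply, sub_apply,
      one_apply_eq_self, norm_smul, Real.norm_two]
  have hle : cfc (fun y ↦ (c * (y * f y)) ^ 2 + (2 * (1 - f y)) ^ 2) H
      ≤ cfc (fun y ↦ 2 * c * |y|) H :=
    cfc_mono fun y _ ↦ by simpa only [mul_assoc] using hf_key y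
  apply add_le_two_mul_sqrt_of_sq_add_sq_le
  rw [hφ, hχ, hH.norm_cfc_apply_sq (by fun_prop), hH.norm_cfc_apply_sq (by fun_prop),
    ← Complex.add_re, ← inner_add_right, ← add_apply, ← cfc_add ..]
  calc _ ≤ (⟪ψ, cfc (fun y ↦ 2 * c * |y|) H ψ⟫_ℂ).re :=
        ContinuousLinearMap.re_inner_map_le_of_le hle ψ
    _ = 2 * (c * (⟪ψ, cfc (fun y : ℝ ↦ |y|) H ψ⟫_ℂ).re) := by
        rw [cfc_const_mul ..]
        simp [mul_assoc]

theorem IsSelfAdjoint.norm_exp_sub_exp_apply_le (hH : IsSelfAdjoint H) {H' : ℋ →L[ℂ] ℋ}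
    (hH' : IsSelfAdjoint H') {α β : ℝ} (hα : 0 ≤ α) (hβ : 0 ≤ β)
    (hrel : ∀ ψ : ℋ, ‖(H - H') ψ‖ ≤ α * ‖H ψ‖ + β * ‖ψ‖) {t : ℝ} (ht : 0 ≤ t) (ψ : ℋ) :
    ‖(NormedSpace.exp (t • (-I) • H) - NormedSpace.exp (t • (-I) • H')) ψ‖ ≤
      2 * √((⟪ψ, cfc (fun y : ℝ ↦ |y|) H ψ⟫_ℂ).re * α * t) + β * t * ‖ψ‖ := by
  obtain ⟨φ, χ, hψ, hφ, hsplit⟩ := hH.exists_energy_split (mul_nonneg hα ht) ψ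
  have hlow : ‖(NormedSpace.exp (t • (-I) • H) - NormedSpace.exp (t • (-I) • H')) φ‖ ≤
      (α * ‖H φ‖ + β * ‖φ‖) * t := by
    refine norm_exp_smul_sub_exp_smul_apply_le hH'.norm_exp_smul_neg_I_smul_apply ht φ
      fun s ↦ ?_
    have hcomm : H (NormedSpace.exp (s • (-I) • H) φ) = NormedSpace.exp (s • (-I) • H) (H φ) :=
      DFunLike.congr_fun (((Commute.refl H).smul_right (-I)).smul_right s).exp_right φ
    rw [← smul_sub, smul_apply, norm_smul, norm_neg, norm_I, one_mul]
    refine (hrel _).trans_eq ?_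
    rw [hcomm, hH.norm_exp_smul_neg_I_smul_apply, hH.norm_exp_smul_neg_I_smul_apply]
  have hhigh : ‖(NormedSpace.exp (t • (-I) • H) - NormedSpace.exp (t • (-I) • H')) χ‖ ≤
      2 * ‖χ‖ := by
    rw [sub_apply]
    refine (norm_sub_le _ _).trans_eq ?_
    rw [hH.norm_exp_smul_neg_I_smul_apply, hH'.norm_exp_smul_neg_I_smul_apply, two_mul]
  calc _ ≤ (α * ‖H φ‖ + β * ‖φ‖) * t + 2 * ‖χ‖ := by
        rw [hψ, map_add]
        exact (norm_add_le _ _).trans (add_le_add hlow hhigh)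
    _ ≤ (α * t * ‖H φ‖ + 2 * ‖χ‖) + β * t * ‖ψ‖ := by
        nlinarith [mul_le_mul_of_nonneg_left hφ (mul_nonneg hβ ht)]
    _ ≤ _ := by
        rw [mul_assoc _ α, mul_comm _ (α * t)]
        exact add_le_add_left hsplit _

end SelfAdjoint

theorem quantum_speed_limit_two_unitary_groups_general
    {ℋ : Type*} [NormedAddCommGroup ℋ] [InnerProductSpace ℂ ℋ] [CompleteSpace ℋ]
    (H H' H₀ : ℋ →L[ℂ] ℋ)
    (hH : IsSelfAdjoint H) (hH' : IsSelfAdjoint H')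
    (α β γ δ : ℝ) (hα : 0 < α) (hβ : 0 < β)
    (hrel : ∀ ψ : ℋ, ‖(H - H') ψ‖ ≤ α * ‖H ψ‖ + β * ‖ψ‖)
    (habs : ∀ ψ : ℋ, (⟪ψ, (cfc (fun t : ℝ => |t|) H) ψ⟫_ℂ).re ≤
      γ * (⟪ψ, H₀ ψ⟫_ℂ).re + δ * ‖ψ‖ ^ 2) :
    ∀ (t : ℝ), 0 ≤ t → ∀ ψ : ℋ, ‖ψ‖ = 1 →
      ‖(NormedSpace.exp ((-(t : ℂ) * Complex.I) • H)
          - NormedSpace.exp ((-(t : ℂ) * Complex.I) • H')) ψ‖ ≤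
        2 * Real.sqrt ((γ * (⟪ψ, H₀ ψ⟫_ℂ).re + δ) * α * t) + β * t := by
  intro t ht ψ hψ
  have hexp (K : ℋ →L[ℂ] ℋ) : (-(t : ℂ) * I) • K = t • (-I) • K := by
    rw [← smul_assoc, Complex.real_smul, mul_neg, neg_mul]
  rw [hexp, hexp]
  refine (hH.norm_exp_sub_exp_apply_le hH' hα.le hβ.le hrel ht ψ).trans ?_
  have hψ_abs := habs ψ
  rw [hψ] at hψ_abs ⊢
  rw [mul_one]
  gcongr
  simpa using hψ_abs

/-- **Quantum speed limit for two different unitary groups (bounded case).**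
If `‖(H − H')ψ‖ ≤ α‖Hψ‖ + β‖ψ‖` and `⟨ψ, |H| ψ⟩ ≤ γ⟨ψ, H₀ψ⟩ + δ‖ψ‖²`, then for unit
vectors `ψ` and `t ≥ 0`,
`‖(e^{−itH} − e^{−itH'})ψ‖ ≤ 2√((γ⟨ψ,H₀ψ⟩ + δ)·α·t) + β·t`. -/
theorem quantum_speed_limit_two_unitary_groups
    {ℋ : Type*} [NormedAddCommGroup ℋ] [InnerProductSpace ℂ ℋ] [CompleteSpace ℋ]
    (H H' H₀ : ℋ →L[ℂ] ℋ)
    (hH : IsSelfAdjoint H) (hH' : IsSelfAdjoint H')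
    (hH₀ : ContinuousLinearMap.IsPositive H₀)
    (α β γ δ : ℝ) (hα : 0 < α) (hβ : 0 < β) (hγ : 0 < γ) (hδ : 0 < δ)
    (hrel : ∀ ψ : ℋ, ‖(H - H') ψ‖ ≤ α * ‖H ψ‖ + β * ‖ψ‖)
    (habs : ∀ ψ : ℋ, (⟪ψ, (cfc (fun t : ℝ => |t|) H) ψ⟫_ℂ).re ≤
      γ * (⟪ψ, H₀ ψ⟫_ℂ).re + δ * ‖ψ‖ ^ 2) :
    ∀ (t : ℝ), 0 ≤ t → ∀ ψ : ℋ, ‖ψ‖ = 1 →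
      ‖(NormedSpace.exp ((-(t : ℂ) * Complex.I) • H)
          - NormedSpace.exp ((-(t : ℂ) * Complex.I) • H')) ψ‖ ≤
        2 * Real.sqrt ((γ * (⟪ψ, H₀ ψ⟫_ℂ).re + δ) * α * t) + β * t :=
  quantum_speed_limit_two_unitary_groups_general H H' H₀ hH hH' α β γ δ hα hβ hrel habs
end

section
/- Let H be a bounded self-adjoint operator on a complex Hilbert space ℋ and let λ > 0. Then λ²·1 + H² is a positive invertible operator, and for every ψ ∈ ℋ one has ⟨ψ, H²(λ²·1 + H²)⁻¹ ψ⟩ ≤ (1/(2λ)) · ⟨ψ, |H| ψ⟩. -/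
/-! Everything is a continuous function of `H`, so by monotonicity of the real continuous functional
calculus the operator inequality reduces to `t² / (λ² + t²) ≤ |t| / (2λ)` on the spectrum, which is
AM-GM in the form `2λ|t| ≤ λ² + t²`. -/

open scoped InnerProductSpace

lemma sq_div_sq_add_sq_le_abs_div {lam : ℝ} (hlam : 0 < lam) (t : ℝ) :
    t ^ 2 / (lam ^ 2 + t ^ 2) ≤ |t| / (2 * lam) := by
  rw [div_le_div_iff₀ (by positivity) (by positivity)]
  nlinarith [sq_nonneg (lam - |t|), abs_nonneg t, sq_abs t]

namespace ContinuousLinearMap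

variable {𝕜 E : Type*} [RCLike 𝕜] [NormedAddCommGroup E] [InnerProductSpace 𝕜 E]

lemma re_inner_le_re_inner_of_le {S T : E →L[𝕜] E} (h : S ≤ T) (x : E) :
    RCLike.re ⟪x, S x⟫_𝕜 ≤ RCLike.re ⟪x, T x⟫_𝕜 := by
  have := ((le_def S T).mp h).re_inner_nonneg_right x
  rwa [sub_apply, inner_sub_right, map_sub, sub_nonneg] at this

end ContinuousLinearMap

section CStarAlgebra

variable {A : Type*} [CStarAlgebra A] {a : A}

lemma IsSelfAdjoint.cfc_sq_add_sq (ha : IsSelfAdjoint a) (lam : ℝ) :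
    cfc (fun t : ℝ => lam ^ 2 + t ^ 2) a = (lam ^ 2 : ℂ) • 1 + a ^ 2 := by
  rw [cfc_add (a := a) (fun _ => lam ^ 2) (fun t => t ^ 2), cfc_const _ _, cfc_pow_id a 2,
    Algebra.algebraMap_eq_smul_one]
  norm_cast

lemma IsSelfAdjoint.smul_one_add_sq_nonneg [PartialOrder A] [StarOrderedRing A]
    (ha : IsSelfAdjoint a) (lam : ℝ) :
    0 ≤ (lam ^ 2 : ℂ) • (1 : A) + a ^ 2 := by
  rw [← ha.cfc_sq_add_sq]
  exact cfc_nonneg fun t _ => by positivity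

lemma IsSelfAdjoint.isUnit_smul_one_add_sq (ha : IsSelfAdjoint a) {lam : ℝ} (hlam : lam ≠ 0) :
    IsUnit ((lam ^ 2 : ℂ) • (1 : A) + a ^ 2) := by
  rw [← ha.cfc_sq_add_sq]
  exact (isUnit_cfc_iff _ a).mpr fun t _ => by positivity

lemma IsSelfAdjoint.sq_mul_inverse_smul_one_add_sq (ha : IsSelfAdjoint a) {lam : ℝ}
    (hlam : lam ≠ 0) :
    a ^ 2 * Ring.inverse ((lam ^ 2 : ℂ) • (1 : A) + a ^ 2) =
      cfc (fun t : ℝ => t ^ 2 / (lam ^ 2 + t ^ 2)) a := by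
  have hne : ∀ t : ℝ, lam ^ 2 + t ^ 2 ≠ 0 := fun t => by positivity
  simp_rw [div_eq_mul_inv]
  rw [cfc_mul (fun t : ℝ => t ^ 2) (fun t : ℝ => (lam ^ 2 + t ^ 2)⁻¹) a,
    cfc_inv (fun t : ℝ => lam ^ 2 + t ^ 2) a fun t _ => hne t, ha.cfc_sq_add_sq, cfc_pow_id a 2]

lemma IsSelfAdjoint.sq_mul_inverse_smul_one_add_sq_le [PartialOrder A] [StarOrderedRing A]
    (ha : IsSelfAdjoint a) {lam : ℝ} (hlam : 0 < lam) :
    a ^ 2 * Ring.inverse ((lam ^ 2 : ℂ) • (1 : A) + a ^ 2) ≤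
      (1 / (2 * lam)) • cfc (fun t : ℝ => |t|) a := by
  rw [ha.sq_mul_inverse_smul_one_add_sq hlam.ne', ← cfc_const_mul _ _ a]
  refine cfc_mono (fun t _ => ?_) (by fun_prop (disch := intro _ _; positivity))
  rw [one_div_mul_eq_div]
  exact sq_div_sq_add_sq_le_abs_div hlam t

end CStarAlgebra

/-- **Key spectral estimate for the quantum speed limit.**
For a bounded self-adjoint operator `H` and `λ > 0`, the operator `λ²·1 + H²` is positive
and invertible, and `⟨ψ, H²(λ²·1 + H²)⁻¹ ψ⟩ ≤ (2λ)⁻¹ ⟨ψ, |H| ψ⟩` for all `ψ`. -/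
theorem spectral_estimate_high_energy_component
    {ℋ : Type*} [NormedAddCommGroup ℋ] [InnerProductSpace ℂ ℋ] [CompleteSpace ℋ]
    (H : ℋ →L[ℂ] ℋ) (hH : IsSelfAdjoint H) (lam : ℝ) (hlam : 0 < lam) :
    IsUnit ((lam ^ 2 : ℂ) • (1 : ℋ →L[ℂ] ℋ) + H ^ 2) ∧
    ContinuousLinearMap.IsPositive ((lam ^ 2 : ℂ) • (1 : ℋ →L[ℂ] ℋ) + H ^ 2) ∧
    ∀ ψ : ℋ,
      (⟪ψ, ((H ^ 2) * Ring.inverse ((lam ^ 2 : ℂ) • (1 : ℋ →L[ℂ] ℋ) + H ^ 2)) ψ⟫_ℂ).re ≤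
        (1 / (2 * lam)) * (⟪ψ, (cfc (fun t : ℝ => |t|) H) ψ⟫_ℂ).re := by
  refine ⟨hH.isUnit_smul_one_add_sq hlam.ne',
    (ContinuousLinearMap.nonneg_iff_isPositive _).mp (hH.smul_one_add_sq_nonneg lam), fun ψ => ?_⟩
  refine (ContinuousLinearMap.re_inner_le_re_inner_of_le
    (hH.sq_mul_inverse_smul_one_add_sq_le hlam) ψ).trans_eq ?_
  rw [smul_apply, ← Complex.coe_smul, inner_smul_right]
  exact Complex.re_ofReal_mul _ _
end

section
/- Let θ ∈ (0, π) and set n := ⌊π/θ⌋ + 1. Then the origin 0 lies in the interior of the convex hull (in ℂ ≅ ℝ²) of the finite set {e^{ikθ} : k = 0, 1, …, n}. -/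
/-!
A point lies in the interior of the convex hull of a set in a finite-dimensional space as
soon as every nonzero linear functional is positive somewhere on the set: otherwise the affine span
is proper, or Hahn–Banach produces a nonzero functional that is `≤ 0` on the whole hull. On `ℂ` a
nonzero real functional evaluated at `e^{it}` is `r cos (t - φ)` with `r > 0`, so it suffices that
every open half-circle contains some `kθ` with `k ≤ ⌊π/θ⌋ + 1`. This holds because consecutive
points are `θ < π` apart while the last one has passed `π`.
-/

open Real Set

theorem affineSpan_eq_top_of_forall_dual_exists_pos {K V : Type*} [Field K] [LinearOrder K]
    [IsStrictOrderedRing K] [AddCommGroup V] [Module K V] {S : Set V} (hne : S.Nonempty)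
    (hS : ∀ f : Module.Dual K V, f ≠ 0 → ∃ s ∈ S, 0 < f s) : affineSpan K S = ⊤ := by
  rw [AffineSubspace.affineSpan_eq_top_iff_vectorSpan_eq_top_of_nonempty K V V hne]
  by_contra hspan
  obtain ⟨f, hf, hker⟩ := (vectorSpan K S).exists_le_ker_of_lt_top (lt_top_iff_ne_top.2 hspan)
  have hconst : ∀ s ∈ S, ∀ t ∈ S, f s = f t := fun s hs t ht => by
    rw [← sub_eq_zero, ← map_sub]
    exact hker (vsub_mem_vectorSpan K hs ht)
  obtain ⟨s, hs, hfs⟩ := hS f hf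
  obtain ⟨t, ht, hft⟩ := hS (-f) (neg_ne_zero.2 hf)
  rw [LinearMap.neg_apply, ← hconst s hs t ht] at hft
  linarith

theorem zero_mem_interior_convexHull_of_forall_dual_exists_pos {E : Type*}
    [NormedAddCommGroup E] [NormedSpace ℝ E] [FiniteDimensional ℝ E] {S : Set E}
    (hne : S.Nonempty) (hS : ∀ f : Module.Dual ℝ E, f ≠ 0 → ∃ s ∈ S, 0 < f s) :
    (0 : E) ∈ interior (convexHull ℝ S) := by
  have hint : (interior (convexHull ℝ S)).Nonempty :=
    interior_convexHull_nonempty_iff_affineSpan_eq_top.2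
      (affineSpan_eq_top_of_forall_dual_exists_pos hne hS)
  by_contra h0
  obtain ⟨f, hf, hle⟩ := geometric_hahn_banach_of_nonempty_interior_point
    (convex_convexHull ℝ S) h0 hint
  obtain ⟨s, hs, hfs⟩ := hS f.toLinearMap (ContinuousLinearMap.coe_injective.ne hf)
  have := hle s (subset_convexHull ℝ S hs)
  rw [map_zero] at this
  exact this.not_gt hfs

theorem Complex.linearMap_apply_eq_re_mul_add_im_mul (f : ℂ →ₗ[ℝ] ℝ) (z : ℂ) :
    f z = z.re * f 1 + z.im * f I := by
  conv_lhs => rw [← re_add_im z, ← mul_one (z.re : ℂ), ← real_smul, ← real_smul]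
  rw [map_add, map_smul, map_smul, smul_eq_mul, smul_eq_mul]

theorem Complex.exists_pos_mul_cos_sub_of_ne_zero {f : ℂ →ₗ[ℝ] ℝ} (hf : f ≠ 0) :
    ∃ r > 0, ∃ φ : ℝ, ∀ t : ℝ, f (exp (t * I)) = r * Real.cos (t - φ) := by
  set w : ℂ := ⟨f 1, f I⟩
  have hw : w ≠ 0 := fun h => hf <| LinearMap.ext fun z => by
    simp only [Complex.ext_iff, zero_re, zero_im, w] at h
    rw [Complex.linearMap_apply_eq_re_mul_add_im_mul, h.1, h.2, LinearMap.zero_apply]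
    ring
  refine ⟨‖w‖, norm_pos_iff.2 hw, arg w, fun t => ?_⟩
  rw [Complex.linearMap_apply_eq_re_mul_add_im_mul, exp_ofReal_mul_I_re, exp_ofReal_mul_I_im,
    Real.cos_sub]
  have hre : ‖w‖ * Real.cos (arg w) = f 1 := norm_mul_cos_arg w
  have him : ‖w‖ * Real.sin (arg w) = f I := norm_mul_sin_arg w
  linear_combination -(Real.cos t * hre + Real.sin t * him)

theorem exists_nat_mul_sub_mem_Ioo {θ ψ : ℝ} (hθ0 : 0 < θ) (hθπ : θ < π)
    (hψ : ψ ∈ Icc (π / 2) (3 * π / 2)) :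
    ∃ k ≤ ⌊π / θ⌋₊ + 1, (k : ℝ) * θ - ψ ∈ Ioo (-(π / 2)) (π / 2) := by
  set x := (ψ - π / 2) / θ
  have hx0 : 0 ≤ x := div_nonneg (by linarith [hψ.1]) hθ0.le
  have hxθ : x * θ = ψ - π / 2 := div_mul_cancel₀ _ hθ0.ne'
  have hxπ : x ≤ π / θ := div_le_div_of_nonneg_right (by linarith [hψ.2]) hθ0.le
  refine ⟨⌊x⌋₊ + 1, by gcongr, ?_⟩
  have hlt : x * θ < (⌊x⌋₊ + 1 : ℕ) * θ := by
    push_cast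
    exact mul_lt_mul_of_pos_right (Nat.lt_floor_add_one x) hθ0
  have hle : ((⌊x⌋₊ + 1 : ℕ) : ℝ) * θ ≤ x * θ + θ := by
    push_cast
    nlinarith [Nat.floor_le hx0]
  constructor <;> linarith

theorem exists_le_floor_div_add_one_cos_nat_mul_sub_pos {θ : ℝ} (hθ0 : 0 < θ) (hθπ : θ < π)
    (φ : ℝ) : ∃ k ≤ ⌊π / θ⌋₊ + 1, 0 < Real.cos (k * θ - φ) := by
  set ψ := toIocMod two_pi_pos (-(π / 2)) φ
  have hψ : ψ ∈ Ioc (-(π / 2)) (-(π / 2) + 2 * π) := toIocMod_mem_Ioc _ _ _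
  have hcos : ∀ x : ℝ, Real.cos (x - φ) = Real.cos (x - ψ) := fun x => by
    rw [← toIocMod_add_toIocDiv_zsmul two_pi_pos (-(π / 2)) φ, zsmul_eq_mul, ← sub_sub,
      Real.cos_sub_int_mul_two_pi]
  simp only [hcos]
  rcases lt_or_ge ψ (π / 2) with hψπ | hψπ
  · refine ⟨0, Nat.zero_le _, Real.cos_pos_of_mem_Ioo ?_⟩
    rw [Nat.cast_zero, zero_mul, zero_sub]
    constructor <;> linarith [hψ.1]
  · obtain ⟨k, hk, hmem⟩ := exists_nat_mul_sub_mem_Ioo hθ0 hθπ ⟨hψπ, by linarith [hψ.2]⟩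
    exact ⟨k, hk, Real.cos_pos_of_mem_Ioo hmem⟩

/-- **Spectral heart of multi-copy perfect discrimination.**
For `θ ∈ (0, π)` and `n = ⌊π/θ⌋ + 1`, the origin lies in the interior of the convex hull
of `{e^{ikθ} : k = 0, …, n}` in `ℂ`. -/
theorem zero_mem_interior_convexHull_exp_arcs
    (θ : ℝ) (hθ : θ ∈ Set.Ioo 0 Real.pi) :
    (0 : ℂ) ∈ interior (convexHull ℝ
      ((fun k : ℕ => Complex.exp (Complex.I * (k * θ))) ''
        {k : ℕ | k ≤ Nat.floor (Real.pi / θ) + 1})) := by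
  refine zero_mem_interior_convexHull_of_forall_dual_exists_pos
    ⟨_, 0, Nat.zero_le _, rfl⟩ fun f hf => ?_
  obtain ⟨r, hr, φ, hfφ⟩ := Complex.exists_pos_mul_cos_sub_of_ne_zero hf
  obtain ⟨k, hk, hcos⟩ := exists_le_floor_div_add_one_cos_nat_mul_sub_pos hθ.1 hθ.2 φ
  refine ⟨_, ⟨k, hk, rfl⟩, ?_⟩
  have hexp : Complex.I * (k * θ) = ((k * θ : ℝ) : ℂ) * Complex.I := by push_cast; ring
  dsimp only
  rw [hexp, hfφ]
  exact mul_pos hr hcos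
end

section
/- Let w, w' be complex numbers with |w| = |w'| = 1 and w ≠ w'. Then there exists a positive integer n such that 0 lies in the convex hull (in ℂ ≅ ℝ²) of the finite set {w^k · (w')^{n−k} : k = 0, 1, …, n}. -/
/-!
Multiplying by `w' ^ n` reduces the claim to the powers of `z = w / w' = exp (φ i)`, where
`0 < |φ| ≤ π`; conjugation reduces `φ < 0` to `φ > 0`, and `φ = π` is `z = -1`. For
`0 < φ < π` and `m = ⌊π / φ⌋`, the step from `z ^ m` to `z ^ (m + 1)` crosses the negative
real axis and is shorter than `π`, so the three points `1, z ^ m, z ^ (m + 1)` leave no gap of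
length `π` on the circle and surround the origin.
-/

open Complex
open scoped Real ComplexConjugate

theorem zero_mem_convexHull_of_sum_smul_eq_zero {R E ι : Type*} [Field R] [LinearOrder R]
    [IsStrictOrderedRing R] [AddCommGroup E] [Module R E] {s : Set E} {t : Finset ι}
    {w : ι → R} {z : ι → E} (hw₀ : ∀ i ∈ t, 0 ≤ w i) (hws : 0 < ∑ i ∈ t, w i)
    (hz : ∀ i ∈ t, z i ∈ s) (h : ∑ i ∈ t, w i • z i = 0) : 0 ∈ convexHull R s := by
  simpa [Finset.centerMass, h] using t.centerMass_mem_convexHull hw₀ hws hz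

theorem LinearMap.zero_mem_convexHull_image {R E F : Type*} [Semiring R] [PartialOrder R]
    [AddCommMonoid E] [AddCommMonoid F] [Module R E] [Module R F] (f : E →ₗ[R] F) {s : Set E}
    (h : 0 ∈ convexHull R s) : 0 ∈ convexHull R (f '' s) :=
  f.image_convexHull s ▸ ⟨0, h, map_zero f⟩

-- Each of the three points is weighted by the sine of the arc opposite to it.
theorem sin_sub_smul_one_add_smul_exp_add_smul_exp (α β : ℝ) :
    Real.sin (β - α) • (1 : ℂ) + (-Real.sin β) • exp (α * I) + Real.sin α • exp (β * I) = 0 := by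
  apply Complex.ext <;>
    simp only [add_re, add_im, smul_re, smul_im, one_re, one_im, exp_ofReal_mul_I_re,
      exp_ofReal_mul_I_im, smul_eq_mul, zero_re, zero_im, Real.sin_sub] <;> ring

theorem zero_mem_convexHull_one_exp_exp {α β : ℝ} (hα₀ : 0 ≤ α) (hα : α ≤ π) (hβ : π < β)
    (hβα : β < α + π) : (0 : ℂ) ∈ convexHull ℝ {1, exp (α * I), exp (β * I)} := by
  have h₀ : 0 < Real.sin (β - α) := Real.sin_pos_of_pos_of_lt_pi (by linarith) (by linarith)
  have h₁ : 0 ≤ -Real.sin β := by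
    rw [← Real.sin_sub_pi]
    exact Real.sin_nonneg_of_nonneg_of_le_pi (by linarith) (by linarith)
  have h₂ : 0 ≤ Real.sin α := Real.sin_nonneg_of_nonneg_of_le_pi hα₀ hα
  refine zero_mem_convexHull_of_sum_smul_eq_zero (t := Finset.univ)
    (w := ![Real.sin (β - α), -Real.sin β, Real.sin α]) (z := ![1, exp (α * I), exp (β * I)])
    ?_ ?_ ?_ ?_
  · simp [Fin.forall_fin_succ, h₀.le, h₁, h₂]
  · simp only [Fin.sum_univ_three, Matrix.cons_val_zero, Matrix.cons_val_one,
      Matrix.cons_val_two, Matrix.tail_cons, Matrix.head_cons]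
    linarith
  · simp [Fin.forall_fin_succ]
  · simpa [Fin.sum_univ_three] using sin_sub_smul_one_add_smul_exp_add_smul_exp α β

theorem exists_zero_mem_convexHull_pow_of_arg_pos {z : ℂ} (hz : ‖z‖ = 1) (h₀ : 0 < arg z)
    (hπ : arg z < π) : ∃ n, 0 < n ∧ (0 : ℂ) ∈ convexHull ℝ ((z ^ ·) '' Set.Iic n) := by
  have hpow (k : ℕ) : z ^ k = exp ((k * arg z : ℝ) * I) := by
    rw [ofReal_mul, ofReal_natCast, mul_assoc, exp_nat_mul]
    conv_lhs => rw [← norm_mul_exp_arg_mul_I z, hz, ofReal_one, one_mul]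
  set m := ⌊π / arg z⌋₊
  have hm : m * arg z ≤ π := (le_div_iff₀ h₀).mp (Nat.floor_le (by positivity))
  have hm₁ : π < (m + 1 : ℕ) * arg z := by
    push_cast
    exact (div_lt_iff₀ h₀).mp (Nat.lt_floor_add_one _)
  refine ⟨m + 1, m.succ_pos, convexHull_mono ?_ (zero_mem_convexHull_one_exp_exp
    (by positivity) hm hm₁ (by push_cast; linarith))⟩
  rintro _ (rfl | rfl | rfl)
  · exact ⟨0, by simp, pow_zero z⟩
  · exact ⟨m, by simp, hpow m⟩
  · exact ⟨m + 1, le_rfl (a := m + 1), hpow (m + 1)⟩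

theorem exists_zero_mem_convexHull_pow {z : ℂ} (hz : ‖z‖ = 1) (h₁ : z ≠ 1) :
    ∃ n, 0 < n ∧ (0 : ℂ) ∈ convexHull ℝ ((z ^ ·) '' Set.Iic n) := by
  have hexp : exp (arg z * I) = z := by
    simpa [hz] using norm_mul_exp_arg_mul_I z
  rcases lt_trichotomy (arg z) 0 with hneg | hzero | hpos
  · have harg : arg (conj z) = -arg z := by
      rw [arg_conj, if_neg (hneg.trans Real.pi_pos).ne]
    obtain ⟨n, hn, h⟩ := exists_zero_mem_convexHull_pow_of_arg_pos (z := conj z)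
      (by rwa [norm_conj]) (by linarith) (by linarith [neg_pi_lt_arg z])
    refine ⟨n, hn, ?_⟩
    simpa [Set.image_image] using conjAe.toLinearMap.zero_mem_convexHull_image h
  · exact absurd (by simpa [hzero] using hexp.symm) h₁
  · rcases (arg_le_pi z).lt_or_eq with hπ | hπ
    · exact exists_zero_mem_convexHull_pow_of_arg_pos hz hpos hπ
    · have hz : z = -1 := by simpa [hπ] using hexp.symm
      refine ⟨1, one_pos, convexHull_mono (s := {1, -1}) ?_ ?_⟩
      · rintro _ (rfl | rfl)
        · exact ⟨0, by simp, by simp⟩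
        · exact ⟨1, by simp, by simp [hz]⟩
      · rw [convexHull_pair]
        exact ⟨1 / 2, 1 / 2, by norm_num, by norm_num, by norm_num, by norm_num⟩

/-- **Acín's theorem at the level of spectra.**
If `w ≠ w'` are unimodular complex numbers, then for some finite number `n` of copies the
origin lies in the convex hull of `{w^k (w')^{n−k} : k = 0, …, n}`. -/
theorem zero_mem_convexHull_powers_of_distinct_unimodular
    (w w' : ℂ) (hw : ‖w‖ = 1) (hw' : ‖w'‖ = 1) (hne : w ≠ w') :
    ∃ n : ℕ, 0 < n ∧ (0 : ℂ) ∈ convexHull ℝ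
      ((fun k : ℕ => w ^ k * w' ^ (n - k)) '' {k : ℕ | k ≤ n}) := by
  have hw'₀ : w' ≠ 0 := norm_ne_zero_iff.mp (by simp [hw'])
  obtain ⟨n, hn, h⟩ := exists_zero_mem_convexHull_pow (z := w / w') (by simp [hw, hw'])
    (by rwa [Ne, div_eq_one_iff_eq hw'₀])
  refine ⟨n, hn, ?_⟩
  convert (LinearMap.mulLeft ℝ (w' ^ n)).zero_mem_convexHull_image h using 2
  rw [Set.image_image]
  refine Set.image_congr fun k (hk : k ≤ n) => ?_
  simp only [LinearMap.mulLeft_apply, div_pow]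
  rw [pow_sub₀ w' hw'₀ hk]
  field_simp
end

section
/- Let θ ∈ (0, π), E ≥ 0, and n be a natural number. Let p₀, p₁, …, p_n be nonnegative real numbers with Σ_{k=0}^n p_k = 1. If Σ_{k=0}^n k·p_k ≤ E and Σ_{k=0}^n p_k·e^{ikθ} = 0 (as a complex number), then E ≥ 1/12 + √6/(9θ). -/
/-!
Taking real parts, `∑ pₖ cos (kθ) = 0`, so `∑ pₖ (1 - cos (kθ)) = 1`.
Since `1 - cos x ≤ |x|`, this forces `1 ≤ θ ∑ k pₖ ≤ θ E`, i.e. `E ≥ 1/θ`,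
and on `(0, π)` the bound `1/θ` dominates `1/12 + √6/(9θ)`.
-/

open Finset

namespace Real

lemma one_sub_cos_le_abs (x : ℝ) : 1 - cos x ≤ |x| := by
  rcases le_or_gt |x| 2 with h | h
  · have hcos : 1 - x ^ 2 / 2 ≤ cos x := one_sub_sq_div_two_le_cos
    nlinarith [abs_nonneg x, sq_abs x]
  · linarith [neg_one_le_cos x]

lemma one_div_twelve_add_sqrt_six_div_le_inv {θ : ℝ} (hθ : 0 < θ) (hθπ : θ < π) :
    1 / 12 + √6 / (9 * θ) ≤ 1 / θ := by
  have hsqrt : √6 ≤ 5 / 2 := by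
    rw [sqrt_le_left (by norm_num)]
    norm_num
  have hθ4 : θ < 4 := hθπ.trans pi_lt_four
  rw [div_add_div _ _ (by norm_num) (by positivity), div_le_div_iff₀ (by positivity) hθ]
  nlinarith

end Real

lemma one_le_sum_mul_abs_of_sum_mul_exp_eq_zero {ι : Type*} {s : Finset ι} {p x : ι → ℝ}
    (hp : ∀ j ∈ s, 0 ≤ p j) (hsum : ∑ j ∈ s, p j = 1)
    (hzero : ∑ j ∈ s, (p j : ℂ) * Complex.exp (x j * Complex.I) = 0) :
    1 ≤ ∑ j ∈ s, p j * |x j| := by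
  have hcos : ∑ j ∈ s, p j * Real.cos (x j) = 0 := by
    simpa only [Complex.re_sum, Complex.re_ofReal_mul, Complex.exp_ofReal_mul_I_re,
      Complex.zero_re] using congrArg Complex.re hzero
  calc 1 = ∑ j ∈ s, p j * (1 - Real.cos (x j)) := by
        simp only [mul_sub, mul_one, sum_sub_distrib, hsum, hcos, sub_zero]
    _ ≤ ∑ j ∈ s, p j * |x j| :=
        sum_le_sum fun j hj => mul_le_mul_of_nonneg_left (Real.one_sub_cos_le_abs _) (hp j hj)

theorem energy_lower_bound_of_vanishing_exponential_sum_general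
    (θ E : ℝ) (hθ : θ ∈ Set.Ioo 0 Real.pi)
    (n : ℕ) (p : ℕ → ℝ)
    (hp : ∀ k ≤ n, 0 ≤ p k)
    (hsum : ∑ k ∈ Finset.range (n + 1), p k = 1)
    (hmean : ∑ k ∈ Finset.range (n + 1), (k : ℝ) * p k ≤ E)
    (hzero : ∑ k ∈ Finset.range (n + 1),
      (p k : ℂ) * Complex.exp (Complex.I * (k * θ)) = 0) :
    1 / 12 + Real.sqrt 6 / (9 * θ) ≤ E := by
  obtain ⟨hθ0, hθπ⟩ := hθ
  have hθE : 1 ≤ θ * E := by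
    calc 1 ≤ ∑ k ∈ range (n + 1), p k * |k * θ| :=
          one_le_sum_mul_abs_of_sum_mul_exp_eq_zero (x := fun k : ℕ => k * θ)
            (fun k hk => hp k (Nat.lt_succ_iff.mp (mem_range.mp hk))) hsum
            (by simpa only [Complex.ofReal_mul, Complex.ofReal_natCast, mul_comm Complex.I]
              using hzero)
      _ = θ * ∑ k ∈ range (n + 1), (k : ℝ) * p k := by
        rw [mul_sum]
        refine sum_congr rfl fun k _ => ?_
        rw [abs_of_nonneg (by positivity)]
        ring
      _ ≤ θ * E := mul_le_mul_of_nonneg_left hmean hθ0.le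
  calc 1 / 12 + Real.sqrt 6 / (9 * θ) ≤ 1 / θ :=
        Real.one_div_twelve_add_sqrt_six_div_le_inv hθ0 hθπ
    _ ≤ E := by rwa [div_le_iff₀ hθ0, mul_comm]

/-- **Lower bound on the threshold energy for perfect discrimination (qubit example).**
If a probability distribution `p₀, …, p_n` has mean at most `E` and
`Σ p_k e^{ikθ} = 0`, then `E ≥ 1/12 + √6/(9θ)`. -/
theorem energy_lower_bound_of_vanishing_exponential_sum
    (θ E : ℝ) (hθ : θ ∈ Set.Ioo 0 Real.pi) (hE : 0 ≤ E)
    (n : ℕ) (p : ℕ → ℝ)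
    (hp : ∀ k ≤ n, 0 ≤ p k)
    (hsum : ∑ k ∈ Finset.range (n + 1), p k = 1)
    (hmean : ∑ k ∈ Finset.range (n + 1), (k : ℝ) * p k ≤ E)
    (hzero : ∑ k ∈ Finset.range (n + 1),
      (p k : ℂ) * Complex.exp (Complex.I * (k * θ)) = 0) :
    1 / 12 + Real.sqrt 6 / (9 * θ) ≤ E :=
  energy_lower_bound_of_vanishing_exponential_sum_general θ E hθ n p hp hsum hmean hzero
end

section
/- For every s ∈ (0, π/2] there exist a 2×2 positive semidefinite Hermitian complex matrix H whose smallest eigenvalue is 0 and a unit vector ψ ∈ ℂ² such that ⟨ψ, Hψ⟩ ≤ s and 1 − |⟨ψ, exp(−iH)ψ⟩|² ≥ 4·(s/π)·(1 − s/π). -/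
/-!
Take `H = diag(0, π)` and put the weight `p = s/π` on its excited level:
`ψ = (√(1 - p), √p)`. The mean energy is `π p = s`, and `exp(-iH) = diag(1, -1)` because
`e^{-iπ} = -1`, so the survival amplitude is `1 - 2p` and `1 - (1 - 2p)² = 4p(1 - p)`:
the bound holds with equality.
-/

open Matrix
open scoped ComplexOrder

section Diagonal

variable {n : Type*} [Fintype n] [DecidableEq n]

theorem exp_neg_I_smul_diagonal (d : n → ℂ) :
    NormedSpace.exp ((-Complex.I) • diagonal d) = diagonal fun i => Complex.exp (-Complex.I * d i) := by
  rw [← diagonal_smul, exp_diagonal, Pi.exp_def, Complex.exp_eq_exp_ℂ]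
  rfl

theorem star_dotProduct_diagonal_mulVec (d ψ : n → ℂ) :
    star ψ ⬝ᵥ (diagonal d *ᵥ ψ) = ∑ i, d i * Complex.normSq (ψ i) := by
  simp only [dotProduct, mulVec_diagonal, Pi.star_apply, ← Complex.mul_conj, Complex.star_def]
  exact Finset.sum_congr rfl fun i _ => by ring

end Diagonal

noncomputable def qubitState (p : ℝ) : Fin 2 → ℂ :=
  ![(√(1 - p) : ℂ), (√p : ℂ)]

theorem star_qubitState_dotProduct_diagonal_mulVec {p : ℝ} (hp : p ∈ Set.Icc 0 1)
    (d : Fin 2 → ℂ) :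
    star (qubitState p) ⬝ᵥ (diagonal d *ᵥ qubitState p) = (1 - p) * d 0 + p * d 1 := by
  rw [star_dotProduct_diagonal_mulVec, Fin.sum_univ_two]
  simp only [qubitState, cons_val_zero, cons_val_one, cons_val_fin_one, Complex.normSq_ofReal,
    Real.mul_self_sqrt hp.1, Real.mul_self_sqrt (sub_nonneg.2 hp.2), Complex.ofReal_sub,
    Complex.ofReal_one]
  ring

theorem qubitState_normalized {p : ℝ} (hp : p ∈ Set.Icc 0 1) :
    star (qubitState p) ⬝ᵥ qubitState p = 1 := by
  simpa [diagonal_one] using star_qubitState_dotProduct_diagonal_mulVec hp 1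

/-- **Tightness of the `√(Et)` quantum speed limit (qubit construction).**
For every `s ∈ (0, π/2]` there are a grounded `2×2` Hamiltonian `H` and a unit vector `ψ`
with `⟨ψ, Hψ⟩ ≤ s` and `1 − |⟨ψ, e^{−iH}ψ⟩|² ≥ 4(s/π)(1 − s/π)`. -/
theorem qubit_speed_limit_tightness
    (s : ℝ) (hs : s ∈ Set.Ioc 0 (Real.pi / 2)) :
    ∃ (H : Matrix (Fin 2) (Fin 2) ℂ) (ψ : Fin 2 → ℂ),
      H.PosSemidef ∧
      (∃ v : Fin 2 → ℂ, v ≠ 0 ∧ H *ᵥ v = 0) ∧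
      star ψ ⬝ᵥ ψ = 1 ∧
      (star ψ ⬝ᵥ (H *ᵥ ψ)).re ≤ s ∧
      4 * (s / Real.pi) * (1 - s / Real.pi) ≤
        1 - ‖star ψ ⬝ᵥ ((NormedSpace.exp ((-Complex.I) • H)) *ᵥ ψ)‖ ^ 2 := by
  obtain ⟨hs0, hs2⟩ := hs
  set p := s / Real.pi with hp_def
  have hp : p ∈ Set.Icc 0 1 :=
    ⟨by positivity, (div_le_one Real.pi_pos).2 (by linarith [Real.pi_pos])⟩
  have hspectrum : ∀ i, 0 ≤ ![0, (Real.pi : ℂ)] i := by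
    intro i
    fin_cases i <;> simp [Real.pi_pos.le]
  have hexp : (fun i => Complex.exp (-Complex.I * ![0, (Real.pi : ℂ)] i)) = ![1, -1] := by
    ext i
    fin_cases i <;> simp [neg_mul, mul_comm Complex.I, Complex.exp_neg, Complex.exp_pi_mul_I]
  refine ⟨diagonal ![0, (Real.pi : ℂ)], qubitState p, posSemidef_diagonal_iff.2 hspectrum,
    ⟨Pi.single 0 1, Pi.single_ne_zero_iff.2 one_ne_zero, by simp⟩,
    qubitState_normalized hp, ?_, ?_⟩
  · rw [star_qubitState_dotProduct_diagonal_mulVec hp]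
    simp [hp_def]
  · rw [exp_neg_I_smul_diagonal, hexp, star_qubitState_dotProduct_diagonal_mulVec hp]
    have hamplitude : (1 - p : ℂ) * ![1, -1] 0 + p * ![1, -1] 1 = ((1 - 2 * p : ℝ) : ℂ) := by
      push_cast
      ring
    rw [hamplitude, Complex.norm_real, Real.norm_eq_abs, sq_abs]
    linarith
end

section
/- Let m ≥ 1, ε > 0, and let S ∈ Sp_{2m}(ℝ) with ‖S − I‖_∞ ≤ ε. If S = O·P is the polar decomposition of S, with O a real orthogonal 2m×2m matrix and P a symmetric positive semidefinite 2m×2m matrix, then ‖O − I‖_∞ ≤ 3ε and ‖P − I‖_∞ ≤ 3ε. -/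
/-! Since `S` is symplectic, `S⁻¹ = Ω Sᵀ Ωᵀ` has the same norm as `S`, so `P⁻¹ = S⁻¹ O` has norm
at most `‖S‖ ≤ 1 + ε` and every eigenvalue `λ` of `P` satisfies `λ ≥ 1 / ‖S‖`. As `P² = SᵀS`,
`|λ² - 1| ≤ ‖SᵀS - 1‖ ≤ (1 + ‖S‖) ε`, and dividing by `λ + 1 ≥ 1 + 1 / ‖S‖` gives
`‖P - 1‖ ≤ ‖S‖ ε`. Since `O` is an isometry, `S - 1 = O (P - 1) + (O - 1)` shows that `‖O - 1‖`
and `‖P - 1‖` differ by at most `ε`. This gives `3ε` for `ε ≤ 1`; for `ε > 1` the trivial bound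
`‖O - 1‖ ≤ 2` suffices. -/

open Matrix
open scoped Matrix.Norms.L2Operator

/-- The standard symplectic form `Ω`, the direct sum of `m` copies of `[[0,1],[-1,0]]`. -/
noncomputable def symplecticForm (m : ℕ) : Matrix (Fin 2 × Fin m) (Fin 2 × Fin m) ℝ :=
  Matrix.blockDiagonal fun _ => !![0, 1; -1, 0]

/-- `S ∈ Sp_{2m}(ℝ)`, i.e. `S Ω Sᵀ = Ω`. -/
def IsSymplectic {m : ℕ} (S : Matrix (Fin 2 × Fin m) (Fin 2 × Fin m) ℝ) : Prop :=
  S * symplecticForm m * Sᵀ = symplecticForm m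

lemma abs_sub_one_le_of_inv_le {x q : ℝ} (hx : 0 < x) (hxq : x⁻¹ ≤ q) :
    |x - 1| ≤ q / (1 + q) * |x * x - 1| := by
  have hq : 0 < q := (inv_pos.mpr hx).trans_le hxq
  have hqx : 1 ≤ x * q := by rw [mul_comm]; exact (inv_le_iff_one_le_mul₀ hx).mp hxq
  rw [show x * x - 1 = (x - 1) * (x + 1) by ring, abs_mul, abs_of_pos (by linarith : 0 < x + 1),
    div_mul_eq_mul_div, le_div_iff₀ (by positivity)]
  nlinarith [abs_nonneg (x - 1)]

lemma norm_star_mul_self_sub_one_le {E : Type*} [NormedRing E] [StarRing E] [NormedStarGroup E]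
    (a : E) : ‖star a * a - 1‖ ≤ (1 + ‖a‖) * ‖a - 1‖ := by
  have hsplit : star a * a - 1 = star a * (a - 1) + star (a - 1) := by
    simp only [star_sub, star_one, mul_sub, mul_one]; abel
  calc ‖star a * a - 1‖ ≤ ‖star a‖ * ‖a - 1‖ + ‖star (a - 1)‖ := by
        rw [hsplit]; exact (norm_add_le _ _).trans (by gcongr; exact norm_mul_le _ _)
    _ = (1 + ‖a‖) * ‖a - 1‖ := by rw [norm_star, norm_star]; ring

namespace CStarRing

variable {E : Type*} [NormedRing E] [StarRing E] [CStarRing E]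

lemma norm_one_le : ‖(1 : E)‖ ≤ 1 := by
  rcases subsingleton_or_nontrivial E with _ | _
  · simp [Subsingleton.elim (1 : E) 0]
  · exact norm_one.le

lemma norm_le_one_of_mem_unitary {U : E} (hU : U ∈ unitary E) : ‖U‖ ≤ 1 := by
  simpa using (norm_mem_unitary_mul 1 hU).trans_le norm_one_le

lemma abs_norm_sub_one_sub_norm_sub_one_le {U : E} (hU : U ∈ unitary E) (a : E) :
    |‖U - 1‖ - ‖a - 1‖| ≤ ‖U * a - 1‖ := by
  have h := abs_norm_sub_norm_le (U - 1) (-(U * (a - 1)))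
  rwa [norm_neg, norm_mem_unitary_mul _ hU, sub_neg_eq_add, mul_sub, mul_one,
    sub_add_sub_cancel'] at h

end CStarRing

section NonnegSpectrum

variable {A : Type*} [NormedRing A] [StarRing A] [NormedAlgebra ℝ A] [PartialOrder A]
  [StarOrderedRing A] [IsometricContinuousFunctionalCalculus ℝ A IsSelfAdjoint]
  [NonnegSpectrumClass ℝ A]

lemma norm_sub_one_le_of_nonneg {u : Aˣ} (hu : 0 ≤ (u : A)) {q : ℝ} (hq : ‖(↑u⁻¹ : A)‖ ≤ q) :
    ‖(u : A) - 1‖ ≤ q / (1 + q) * ‖(u : A) * u - 1‖ := by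
  have hsub : (u : A) - 1 = cfc (fun x : ℝ => x - 1) (u : A) := by
    rw [cfc_sub _ _ (u : A), cfc_id' ℝ (u : A), cfc_const_one ℝ (u : A)]
  have hsq : (u : A) * u - 1 = cfc (fun x : ℝ => x * x - 1) (u : A) := by
    rw [cfc_sub _ _ (u : A), cfc_mul _ _ (u : A), cfc_id' ℝ (u : A), cfc_const_one ℝ (u : A)]
  have hq0 : 0 ≤ q := (norm_nonneg _).trans hq
  rw [hsub]
  refine norm_cfc_le (by positivity) fun x hx => ?_
  have hx0 : 0 < x := by
    refine lt_of_le_of_ne (spectrum_nonneg_of_nonneg hu hx) ?_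
    rintro rfl; exact spectrum.zero_notMem ℝ u.isUnit hx
  have hxq : x⁻¹ ≤ q := by
    have := norm_apply_le_norm_cfc (fun x : ℝ => x⁻¹) (u : A) hx
    rw [cfc_inv_id u, Real.norm_eq_abs, abs_of_pos (inv_pos.mpr hx0)] at this
    exact this.trans hq
  have hsq_le := norm_apply_le_norm_cfc (fun x : ℝ => x * x - 1) (u : A) hx
  rw [← hsq] at hsq_le
  exact (abs_sub_one_le_of_inv_le hx0 hxq).trans
    (mul_le_mul_of_nonneg_left hsq_le (by positivity))

end NonnegSpectrum

lemma Matrix.mem_unitary_of_mul_transpose_eq_one {n : Type*} [Fintype n] [DecidableEq n]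
    {O : Matrix n n ℝ} (hO : O * Oᵀ = 1) : O ∈ unitary (Matrix n n ℝ) := by
  rwa [← unitaryGroup, mem_unitaryGroup_iff, star_eq_conjTranspose,
    conjTranspose_eq_transpose_of_trivial]

lemma symplecticForm_mem_unitary (m : ℕ) : symplecticForm m ∈ unitary _ := by
  rw [← unitaryGroup, mem_unitaryGroup_iff, star_eq_conjTranspose, symplecticForm,
    blockDiagonal_conjTranspose, ← blockDiagonal_mul, ← blockDiagonal_one]
  congr 1; ext1 _
  ext i j; fin_cases i <;> fin_cases j <;> simp [Matrix.mul_apply, Fin.sum_univ_two]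

namespace IsSymplectic

variable {m : ℕ} {S : Matrix (Fin 2 × Fin m) (Fin 2 × Fin m) ℝ}

lemma mul_symplecticForm_mul_transpose_mul_star_eq_one (hS : IsSymplectic S) :
    S * (symplecticForm m * Sᵀ * star (symplecticForm m)) = 1 := by
  rw [← mul_assoc, ← mul_assoc, hS]
  exact Unitary.mul_star_self_of_mem (symplecticForm_mem_unitary m)

lemma inv_eq (hS : IsSymplectic S) :
    S⁻¹ = symplecticForm m * Sᵀ * star (symplecticForm m) :=
  inv_eq_right_inv hS.mul_symplecticForm_mul_transpose_mul_star_eq_one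

lemma mul_inv (hS : IsSymplectic S) : S * S⁻¹ = 1 := by
  rw [hS.inv_eq]; exact hS.mul_symplecticForm_mul_transpose_mul_star_eq_one

lemma norm_inv (hS : IsSymplectic S) : ‖S⁻¹‖ = ‖S‖ := by
  have hΩ := symplecticForm_mem_unitary m
  rw [hS.inv_eq, CStarRing.norm_mul_mem_unitary _ (Unitary.star_mem hΩ),
    CStarRing.norm_mem_unitary_mul _ hΩ,
    ← conjTranspose_eq_transpose_of_trivial, l2_opNorm_conjTranspose]

end IsSymplectic

open scoped MatrixOrder

theorem polar_decomposition_stability_general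
    (m : ℕ) (ε : ℝ)
    (S O P : Matrix (Fin 2 × Fin m) (Fin 2 × Fin m) ℝ)
    (hS : IsSymplectic S) (hSI : ‖S - 1‖ ≤ ε)
    (hO : O * Oᵀ = 1) (hP : P.PosSemidef)
    (hdecomp : S = O * P) :
    ‖O - 1‖ ≤ 3 * ε ∧ ‖P - 1‖ ≤ 3 * ε := by
  have hOu := mem_unitary_of_mul_transpose_eq_one hO
  have hPS : P = star O * S := by
    rw [hdecomp, ← mul_assoc, Unitary.star_mul_self_of_mem hOu, one_mul]
  have hPQ : P * (S⁻¹ * O) = 1 := by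
    rw [hPS, mul_assoc, ← mul_assoc S, hS.mul_inv, one_mul, Unitary.star_mul_self_of_mem hOu]
  have hSS : star S * S = P * P := by
    rw [hdecomp, star_mul, mul_assoc, ← mul_assoc (star O), Unitary.star_mul_self_of_mem hOu,
      one_mul, hP.isHermitian.star_eq]
  have h1 : ‖(1 : Matrix (Fin 2 × Fin m) (Fin 2 × Fin m) ℝ)‖ ≤ 1 := CStarRing.norm_one_le
  have hSnorm : ‖S‖ ≤ 1 + ε := by linarith [norm_le_norm_add_norm_sub' S 1]
  have hPsub : ‖P - 1‖ ≤ ‖S‖ * ε := calc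
    ‖P - 1‖ ≤ ‖S‖ / (1 + ‖S‖) * ‖P * P - 1‖ :=
      norm_sub_one_le_of_nonneg (u := ⟨P, S⁻¹ * O, hPQ, mul_eq_one_comm.mp hPQ⟩) hP.nonneg
        (by rw [Units.inv_mk, CStarRing.norm_mul_mem_unitary _ hOu, hS.norm_inv])
    _ ≤ ‖S‖ / (1 + ‖S‖) * ((1 + ‖S‖) * ε) := by
      rw [← hSS]; gcongr; exact (norm_star_mul_self_sub_one_le S).trans (by gcongr)
    _ = ‖S‖ * ε := by field_simp
  have hOP := abs_le.mp (hdecomp ▸ CStarRing.abs_norm_sub_one_sub_norm_sub_one_le hOu P)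
  have hO2 : ‖O - 1‖ ≤ 2 := by
    linarith [norm_sub_le O 1, CStarRing.norm_le_one_of_mem_unitary hOu]
  have hε : 0 ≤ ε := (norm_nonneg _).trans hSI
  have hSε := mul_le_mul_of_nonneg_right hSnorm hε
  constructor <;> rcases le_or_gt ε 1 with h | h <;> nlinarith

/-- **Stability of the polar decomposition near the identity.**
If a symplectic `S` satisfies `‖S − I‖ ≤ ε` and `S = O·P` with `O` orthogonal and `P`
symmetric positive semidefinite, then `‖O − I‖ ≤ 3ε` and `‖P − I‖ ≤ 3ε`. -/
theorem polar_decomposition_stability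
    (m : ℕ) (hm : 1 ≤ m) (ε : ℝ) (hε : 0 < ε)
    (S O P : Matrix (Fin 2 × Fin m) (Fin 2 × Fin m) ℝ)
    (hS : IsSymplectic S) (hSI : ‖S - 1‖ ≤ ε)
    (hO : O * Oᵀ = 1) (hP : P.PosSemidef)
    (hdecomp : S = O * P) :
    ‖O - 1‖ ≤ 3 * ε ∧ ‖P - 1‖ ≤ 3 * ε :=
  polar_decomposition_stability_general m ε S O P hS hSI hO hP hdecomp
end

section
/- Fix μ ∈ [0,1) and let ε, δ ≥ 0 satisfy δ + ε ≤ μ. Let V, W, Ṽ, W̃ be real n×n matrices such that ‖V − Ṽ‖_∞ ≤ ε, ‖W − W̃‖_∞ ≤ ε, ‖V − I‖_∞ ≤ δ and ‖W − I‖_∞ ≤ δ. Then V, W, Ṽ, W̃ are all invertible and ‖VWV⁻¹W⁻¹ − ṼW̃Ṽ⁻¹W̃⁻¹‖_∞ ≤ ((16 − 12μ + 4μ²)/(1−μ)³)·δ·ε + ((7 − 9μ + 13μ² − 3μ³)/(1−μ)⁴)·ε². -/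
open Matrix
open scoped Matrix.Norms.L2Operator

/-!
Write `[x, y] = x y x⁻¹ y⁻¹` and `⁅x, y⁆ = x y - y x`. Then `[x, y] - 1 = ⁅x, y⁆ x⁻¹ y⁻¹`, so

  `[x, y] - [x', y'] = ⁅x, y⁆ (x⁻¹ y⁻¹ - x'⁻¹ y'⁻¹) + (⁅x, y⁆ - ⁅x', y'⁆) x'⁻¹ y'⁻¹`.

Since `⁅x, y⁆ = ⁅x - 1, y - 1⁆` is quadratic in the distances to `1`, the first term is
`O(δ²ε)` and the second `O(δε + ε²)`. All four elements lie within `μ` of `1`, so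
`x⁻¹ = 1 + (1 - x) x⁻¹` bounds each inverse by `(1 - μ)⁻¹`.
-/

open scoped Ring

lemma CStarRing.norm_one_le_s14 {E : Type*} [NormedRing E] [StarRing E] [CStarRing E] :
    ‖(1 : E)‖ ≤ 1 := by
  nontriviality E
  exact CStarRing.norm_one.le

section NormedRing

variable {R : Type*} [NormedRing R]

lemma isUnit_of_norm_one_sub_lt_one [HasSummableGeomSeries R] {x : R} (h : ‖1 - x‖ < 1) :
    IsUnit x :=
  sub_sub_self (1 : R) x ▸ isUnit_one_sub_of_norm_lt_one h

lemma norm_ringInverse_le_of_norm_one_sub_le (h1 : ‖(1 : R)‖ ≤ 1) {x : R} (hx : IsUnit x)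
    {μ : ℝ} (hμ : μ < 1) (h : ‖1 - x‖ ≤ μ) : ‖x⁻¹ʳ‖ ≤ (1 - μ)⁻¹ := by
  have hneumann : x⁻¹ʳ = 1 + (1 - x) * x⁻¹ʳ := by
    rw [sub_mul, one_mul, Ring.mul_inverse_cancel x hx, add_sub_cancel]
  have hrec : ‖x⁻¹ʳ‖ ≤ 1 + μ * ‖x⁻¹ʳ‖ :=
    calc ‖x⁻¹ʳ‖ = ‖1 + (1 - x) * x⁻¹ʳ‖ := congrArg norm hneumann
      _ ≤ ‖(1 : R)‖ + ‖(1 - x) * x⁻¹ʳ‖ := norm_add_le _ _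
      _ ≤ 1 + μ * ‖x⁻¹ʳ‖ := add_le_add h1 (norm_mul_le_of_le h le_rfl)
  rw [← one_div, le_div_iff₀ (by linarith)]
  linarith

lemma norm_lie_le (a b : R) : ‖⁅a, b⁆‖ ≤ 2 * ‖a‖ * ‖b‖ := by
  rw [Ring.lie_def]
  linarith [norm_sub_le (a * b) (b * a), norm_mul_le a b, norm_mul_le b a, mul_comm ‖a‖ ‖b‖]

lemma lie_sub_one_sub_one (x y : R) : ⁅x - 1, y - 1⁆ = ⁅x, y⁆ := by
  simp only [Ring.lie_def]
  noncomm_ring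

lemma lie_sub_lie (x y x' y' : R) :
    ⁅x, y⁆ - ⁅x', y'⁆ = ⁅x - 1, y - y'⁆ + ⁅x - x', y' - 1⁆ := by
  simp only [Ring.lie_def]
  noncomm_ring

lemma mul_mul_inverse_mul_inverse_sub_one {x y : R} (hx : IsUnit x) (hy : IsUnit y) :
    x * y * x⁻¹ʳ * y⁻¹ʳ - 1 = ⁅x, y⁆ * (x⁻¹ʳ * y⁻¹ʳ) := by
  have hyx : y * x * (x⁻¹ʳ * y⁻¹ʳ) = 1 := by
    rw [mul_assoc, ← mul_assoc x, Ring.mul_inverse_cancel x hx, one_mul,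
      Ring.mul_inverse_cancel y hy]
  rw [Ring.lie_def, sub_mul, hyx, ← mul_assoc]

lemma norm_ringInverse_sub_le {x x' : R} (h : IsUnit x ↔ IsUnit x') {r ε : ℝ}
    (hx : ‖x⁻¹ʳ‖ ≤ r) (hx' : ‖x'⁻¹ʳ‖ ≤ r) (hxx' : ‖x - x'‖ ≤ ε) :
    ‖x⁻¹ʳ - x'⁻¹ʳ‖ ≤ r * ε * r := by
  rw [Ring.inverse_sub_inverse h]
  exact norm_mul_le_of_le (norm_mul_le_of_le hx (norm_sub_rev x x' ▸ hxx')) hx'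

lemma norm_groupCommutator_sub_le_of_norm_ringInverse_le {x y x' y' : R}
    (hx : IsUnit x) (hy : IsUnit y) (hx' : IsUnit x') (hy' : IsUnit y') {r δ ε : ℝ}
    (hxr : ‖x⁻¹ʳ‖ ≤ r) (hyr : ‖y⁻¹ʳ‖ ≤ r) (hx'r : ‖x'⁻¹ʳ‖ ≤ r) (hy'r : ‖y'⁻¹ʳ‖ ≤ r)
    (hxδ : ‖x - 1‖ ≤ δ) (hyδ : ‖y - 1‖ ≤ δ) (hy'δ : ‖y' - 1‖ ≤ δ + ε)
    (hxx' : ‖x - x'‖ ≤ ε) (hyy' : ‖y - y'‖ ≤ ε) :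
    ‖x * y * x⁻¹ʳ * y⁻¹ʳ - x' * y' * x'⁻¹ʳ * y'⁻¹ʳ‖ ≤
      4 * δ ^ 2 * ε * r ^ 3 + (4 * δ * ε + 2 * ε ^ 2) * r ^ 2 := by
  have hδ : 0 ≤ δ := (norm_nonneg _).trans hxδ
  have hε : 0 ≤ ε := (norm_nonneg _).trans hxx'
  have hdecomp : x * y * x⁻¹ʳ * y⁻¹ʳ - x' * y' * x'⁻¹ʳ * y'⁻¹ʳ =
      ⁅x, y⁆ * (x⁻¹ʳ * y⁻¹ʳ - x'⁻¹ʳ * y'⁻¹ʳ) + (⁅x, y⁆ - ⁅x', y'⁆) * (x'⁻¹ʳ * y'⁻¹ʳ) := by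
    rw [← sub_sub_sub_cancel_right _ _ 1, mul_mul_inverse_mul_inverse_sub_one hx hy,
      mul_mul_inverse_mul_inverse_sub_one hx' hy']
    noncomm_ring
  have hlie : ‖⁅x, y⁆‖ ≤ 2 * δ * δ := by
    rw [← lie_sub_one_sub_one]
    refine (norm_lie_le _ _).trans ?_
    gcongr
  have hlie_sub : ‖⁅x, y⁆ - ⁅x', y'⁆‖ ≤ 2 * δ * ε + 2 * ε * (δ + ε) := by
    rw [lie_sub_lie]
    refine (norm_add_le _ _).trans (add_le_add ((norm_lie_le _ _).trans ?_)
      ((norm_lie_le _ _).trans ?_)) <;> gcongr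
  have hinv_sub : ‖x⁻¹ʳ * y⁻¹ʳ - x'⁻¹ʳ * y'⁻¹ʳ‖ ≤ r * ε * r * r + r * (r * ε * r) := by
    rw [show x⁻¹ʳ * y⁻¹ʳ - x'⁻¹ʳ * y'⁻¹ʳ =
        (x⁻¹ʳ - x'⁻¹ʳ) * y⁻¹ʳ + x'⁻¹ʳ * (y⁻¹ʳ - y'⁻¹ʳ) by noncomm_ring]
    exact (norm_add_le _ _).trans (add_le_add
      (norm_mul_le_of_le (norm_ringInverse_sub_le (iff_of_true hx hx') hxr hx'r hxx') hyr)
      (norm_mul_le_of_le hx'r (norm_ringInverse_sub_le (iff_of_true hy hy') hyr hy'r hyy')))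
  calc _ ≤ 2 * δ * δ * (r * ε * r * r + r * (r * ε * r)) +
          (2 * δ * ε + 2 * ε * (δ + ε)) * (r * r) :=
        hdecomp ▸ (norm_add_le _ _).trans (add_le_add (norm_mul_le_of_le hlie hinv_sub)
          (norm_mul_le_of_le hlie_sub (norm_mul_le_of_le hx'r hy'r)))
    _ = 4 * δ ^ 2 * ε * r ^ 3 + (4 * δ * ε + 2 * ε ^ 2) * r ^ 2 := by ring

theorem norm_groupCommutator_sub_le [HasSummableGeomSeries R] (h1 : ‖(1 : R)‖ ≤ 1)
    {x y x' y' : R} {μ δ ε : ℝ} (hμ : μ < 1) (hsum : δ + ε ≤ μ)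
    (hxδ : ‖x - 1‖ ≤ δ) (hyδ : ‖y - 1‖ ≤ δ) (hxx' : ‖x - x'‖ ≤ ε) (hyy' : ‖y - y'‖ ≤ ε) :
    IsUnit x ∧ IsUnit y ∧ IsUnit x' ∧ IsUnit y' ∧
      ‖x * y * x⁻¹ʳ * y⁻¹ʳ - x' * y' * x'⁻¹ʳ * y'⁻¹ʳ‖ ≤
        4 * δ ^ 2 * ε / (1 - μ) ^ 3 + (4 * δ * ε + 2 * ε ^ 2) / (1 - μ) ^ 2 := by
  have hδμ : δ ≤ μ := by linarith [(norm_nonneg _).trans hxx']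
  have hx'δ : ‖x' - 1‖ ≤ δ + ε := by
    linarith [norm_sub_le_norm_sub_add_norm_sub x' x 1, norm_sub_rev x x']
  have hy'δ : ‖y' - 1‖ ≤ δ + ε := by
    linarith [norm_sub_le_norm_sub_add_norm_sub y' y 1, norm_sub_rev y y']
  have hxμ : ‖1 - x‖ ≤ μ := norm_sub_rev x 1 ▸ hxδ.trans hδμ
  have hyμ : ‖1 - y‖ ≤ μ := norm_sub_rev y 1 ▸ hyδ.trans hδμ
  have hx'μ : ‖1 - x'‖ ≤ μ := norm_sub_rev x' 1 ▸ hx'δ.trans hsum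
  have hy'μ : ‖1 - y'‖ ≤ μ := norm_sub_rev y' 1 ▸ hy'δ.trans hsum
  have hx := isUnit_of_norm_one_sub_lt_one (hxμ.trans_lt hμ)
  have hy := isUnit_of_norm_one_sub_lt_one (hyμ.trans_lt hμ)
  have hx' := isUnit_of_norm_one_sub_lt_one (hx'μ.trans_lt hμ)
  have hy' := isUnit_of_norm_one_sub_lt_one (hy'μ.trans_lt hμ)
  refine ⟨hx, hy, hx', hy', ?_⟩
  refine (norm_groupCommutator_sub_le_of_norm_ringInverse_le hx hy hx' hy'
    (norm_ringInverse_le_of_norm_one_sub_le h1 hx hμ hxμ)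
    (norm_ringInverse_le_of_norm_one_sub_le h1 hy hμ hyμ)
    (norm_ringInverse_le_of_norm_one_sub_le h1 hx' hμ hx'μ)
    (norm_ringInverse_le_of_norm_one_sub_le h1 hy' hμ hy'μ) hxδ hyδ hy'δ hxx' hyy').trans_eq ?_
  rw [div_eq_mul_inv, div_eq_mul_inv, inv_pow, inv_pow]

end NormedRing

lemma sq_mul_div_pow_three_add_div_sq_le {μ δ ε : ℝ} (hμ : μ < 1) (hδ : 0 ≤ δ) (hε : 0 ≤ ε)
    (hsum : δ + ε ≤ μ) :
    4 * δ ^ 2 * ε / (1 - μ) ^ 3 + (4 * δ * ε + 2 * ε ^ 2) / (1 - μ) ^ 2 ≤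
      ((16 - 12 * μ + 4 * μ ^ 2) / (1 - μ) ^ 3) * δ * ε +
      ((7 - 9 * μ + 13 * μ ^ 2 - 3 * μ ^ 3) / (1 - μ) ^ 4) * ε ^ 2 := by
  have h1μ : 0 < 1 - μ := by linarith
  have hμδ : 0 ≤ μ - δ := by linarith
  have h11 : 0 ≤ 11 - 3 * μ := by linarith
  -- The paper's constants are crude: each summand of the numerator below is nonnegative.
  have hdiff : ((16 - 12 * μ + 4 * μ ^ 2) / (1 - μ) ^ 3) * δ * ε +
      ((7 - 9 * μ + 13 * μ ^ 2 - 3 * μ ^ 3) / (1 - μ) ^ 4) * ε ^ 2 -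
      (4 * δ ^ 2 * ε / (1 - μ) ^ 3 + (4 * δ * ε + 2 * ε ^ 2) / (1 - μ) ^ 2) =
      ((1 - μ) * δ * ε * (12 * (1 - μ) + 4 * μ ^ 2) + 4 * (1 - μ) * δ * ε * (μ - δ) +
        ε ^ 2 * (5 * (1 - μ) + μ ^ 2 * (11 - 3 * μ))) / (1 - μ) ^ 4 := by
    field_simp
    ring
  rw [← sub_nonneg, hdiff]
  bound

theorem commutator_perturbation_bound_general
    (n : ℕ) (μ ε δ : ℝ) (hμ : μ ∈ Set.Ico (0 : ℝ) 1)
    (hsum : δ + ε ≤ μ)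
    (V W Vt Wt : Matrix (Fin n) (Fin n) ℝ)
    (hVVt : ‖V - Vt‖ ≤ ε) (hWWt : ‖W - Wt‖ ≤ ε)
    (hVI : ‖V - 1‖ ≤ δ) (hWI : ‖W - 1‖ ≤ δ) :
    IsUnit V ∧ IsUnit W ∧ IsUnit Vt ∧ IsUnit Wt ∧
    ‖V * W * V⁻¹ * W⁻¹ - Vt * Wt * Vt⁻¹ * Wt⁻¹‖ ≤
      ((16 - 12 * μ + 4 * μ ^ 2) / (1 - μ) ^ 3) * δ * ε +
      ((7 - 9 * μ + 13 * μ ^ 2 - 3 * μ ^ 3) / (1 - μ) ^ 4) * ε ^ 2 := by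
  obtain ⟨hV, hW, hVt, hWt, hbound⟩ :=
    norm_groupCommutator_sub_le CStarRing.norm_one_le_s14 hμ.2 hsum hVI hWI hVVt hWWt
  simp only [Matrix.nonsing_inv_eq_ringInverse]
  exact ⟨hV, hW, hVt, hWt, hbound.trans <|
    sq_mul_div_pow_three_add_div_sq_le hμ.2 ((norm_nonneg _).trans hVI)
      ((norm_nonneg _).trans hVVt) hsum⟩

/-- **Quantitative perturbation lemma for group commutators of matrices.**
If `‖V − Ṽ‖, ‖W − W̃‖ ≤ ε`, `‖V − I‖, ‖W − I‖ ≤ δ` and `δ + ε ≤ μ < 1`, then all four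
matrices are invertible and the group commutators differ in operator norm by at most
`((16 − 12μ + 4μ²)/(1−μ)³)·δε + ((7 − 9μ + 13μ² − 3μ³)/(1−μ)⁴)·ε²`. -/
theorem commutator_perturbation_bound
    (n : ℕ) (μ ε δ : ℝ) (hμ : μ ∈ Set.Ico (0 : ℝ) 1)
    (hε : 0 ≤ ε) (hδ : 0 ≤ δ) (hsum : δ + ε ≤ μ)
    (V W Vt Wt : Matrix (Fin n) (Fin n) ℝ)
    (hVVt : ‖V - Vt‖ ≤ ε) (hWWt : ‖W - Wt‖ ≤ ε)
    (hVI : ‖V - 1‖ ≤ δ) (hWI : ‖W - 1‖ ≤ δ) :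
    IsUnit V ∧ IsUnit W ∧ IsUnit Vt ∧ IsUnit Wt ∧
    ‖V * W * V⁻¹ * W⁻¹ - Vt * Wt * Vt⁻¹ * Wt⁻¹‖ ≤
      ((16 - 12 * μ + 4 * μ ^ 2) / (1 - μ) ^ 3) * δ * ε +
      ((7 - 9 * μ + 13 * μ ^ 2 - 3 * μ ^ 3) / (1 - μ) ^ 4) * ε ^ 2 :=
  commutator_perturbation_bound_general n μ ε δ hμ hsum V W Vt Wt hVVt hWWt hVI hWI
end

section
/- Let m ≥ 1 and let P ∈ Sp_{2m}(ℝ) be symmetric and positive definite, with (positive) eigenvalues λ₁, …, λ_{2m}. Then Σ_{i=1}^{2m} (ln λ_i)² ≤ ‖P‖_∞² · Σ_{i=1}^{2m} (λ_i − 1)². Equivalently, ‖ln P‖₂ ≤ ‖P‖_∞ · ‖P − I‖₂, where ln P is the matrix logarithm of P and ‖·‖₂ the Hilbert–Schmidt (Frobenius) norm. -/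
open Matrix
open scoped Matrix.Norms.L2Operator

lemma Real.abs_log_le_max_mul_abs_sub_one {x : ℝ} (hx : 0 < x) :
    |Real.log x| ≤ max x x⁻¹ * |x - 1| := by
  rcases le_or_gt 1 x with h | h
  · calc |Real.log x| = Real.log x := abs_of_nonneg (Real.log_nonneg h)
      _ ≤ x - 1 := Real.log_le_sub_one_of_pos hx
      _ ≤ x * |x - 1| := by rw [abs_of_nonneg (by linarith)]; nlinarith
      _ ≤ max x x⁻¹ * |x - 1| := by gcongr; exact le_max_left _ _
  · calc |Real.log x| = Real.log x⁻¹ := by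
          rw [Real.log_inv, abs_of_nonpos (Real.log_nonpos hx.le h.le)]
      _ ≤ x⁻¹ - 1 := Real.log_le_sub_one_of_pos (inv_pos.2 hx)
      _ = x⁻¹ * |x - 1| := by rw [abs_of_neg (by linarith), neg_sub]; field_simp
      _ ≤ max x x⁻¹ * |x - 1| := by gcongr; exact le_max_right _ _

lemma Matrix.norm_le_l2_opNorm_of_mulVec_eq_smul {𝕜 n : Type*} [RCLike 𝕜] [Fintype n]
    [DecidableEq n] (A : Matrix n n 𝕜) {x : n → 𝕜} {μ : 𝕜} (hx : x ≠ 0) (hAx : A *ᵥ x = μ • x) :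
    ‖μ‖ ≤ ‖A‖ := by
  have hx' : 0 < ‖WithLp.toLp 2 x‖ := norm_pos_iff.2 (by simpa using hx)
  have h := A.l2_opNorm_mulVec (WithLp.toLp 2 x)
  rw [WithLp.ofLp_toLp, hAx] at h
  change ‖μ • WithLp.toLp 2 x‖ ≤ _ at h
  rw [norm_smul] at h
  exact le_of_mul_le_mul_right h hx'

lemma Matrix.mulVec_mulVec_eq_inv_smul_of_mul_mul_eq {K n : Type*} [Field K] [Fintype n]
    {P J : Matrix n n K} (hPJP : P * J * P = J) {v : n → K} {μ : K} (hμ : μ ≠ 0)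
    (hv : P *ᵥ v = μ • v) : P *ᵥ (J *ᵥ v) = μ⁻¹ • (J *ᵥ v) := by
  have hJv : J *ᵥ v = μ • P *ᵥ (J *ᵥ v) := by
    conv_lhs => rw [← hPJP]
    rw [← mulVec_mulVec, ← mulVec_mulVec, hv, mulVec_smul, mulVec_smul]
  conv_rhs => rw [hJv]
  rw [smul_smul, inv_mul_cancel₀ hμ, one_smul]

lemma symplecticForm_transpose_mul (m : ℕ) :
    (symplecticForm m)ᵀ * symplecticForm m = 1 := by
  have hblock : (!![0, 1; -1, 0] : Matrix (Fin 2) (Fin 2) ℝ)ᵀ * !![0, 1; -1, 0] = 1 := by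
    ext i j
    fin_cases i <;> fin_cases j <;> simp [mul_apply, Fin.sum_univ_two]
  rw [symplecticForm, blockDiagonal_transpose, ← blockDiagonal_mul]
  simp only [hblock]
  exact blockDiagonal_one

lemma symplecticForm_mulVec_ne_zero {m : ℕ} {v : Fin 2 × Fin m → ℝ} (hv : v ≠ 0) :
    symplecticForm m *ᵥ v ≠ 0 := by
  intro hΩv
  apply hv
  rw [← one_mulVec v, ← symplecticForm_transpose_mul, ← mulVec_mulVec, hΩv, mulVec_zero]

lemma IsSymplectic.inv_le_l2_opNorm_of_mulVec_eq_smul {m : ℕ}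
    {P : Matrix (Fin 2 × Fin m) (Fin 2 × Fin m) ℝ} (hP : IsSymplectic P) (hPt : Pᵀ = P)
    {v : Fin 2 × Fin m → ℝ} {μ : ℝ} (hv : v ≠ 0) (hμ : 0 < μ) (hPv : P *ᵥ v = μ • v) :
    μ⁻¹ ≤ ‖P‖ := by
  have hPΩP : P * symplecticForm m * P = symplecticForm m := by
    rwa [IsSymplectic, hPt] at hP
  have h := P.norm_le_l2_opNorm_of_mulVec_eq_smul (symplecticForm_mulVec_ne_zero hv)
    (mulVec_mulVec_eq_inv_smul_of_mul_mul_eq hPΩP hμ.ne' hPv)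
  rwa [Real.norm_of_nonneg (inv_nonneg.2 hμ.le)] at h

theorem log_bound_positive_symplectic_general
    (m : ℕ)
    (P : Matrix (Fin 2 × Fin m) (Fin 2 × Fin m) ℝ)
    (hPsymp : IsSymplectic P) (hPpos : P.PosDef) :
    ∑ i, (Real.log (hPpos.1.eigenvalues i)) ^ 2 ≤
      ‖P‖ ^ 2 * ∑ i, (hPpos.1.eigenvalues i - 1) ^ 2 := by
  rw [Finset.mul_sum]
  refine Finset.sum_le_sum fun i _ => ?_
  set μ := hPpos.1.eigenvalues i
  have hμ : 0 < μ := hPpos.eigenvalues_pos i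
  have hv : ⇑(hPpos.1.eigenvectorBasis i) ≠ 0 := by
    simpa using hPpos.1.eigenvectorBasis.orthonormal.ne_zero i
  have hPv := hPpos.1.mulVec_eigenvectorBasis i
  have hPt : Pᵀ = P := hPpos.1
  have hmax : max μ μ⁻¹ ≤ ‖P‖ := max_le
    (Real.norm_of_nonneg hμ.le ▸ P.norm_le_l2_opNorm_of_mulVec_eq_smul hv hPv)
    (hPsymp.inv_le_l2_opNorm_of_mulVec_eq_smul hPt hv hμ hPv)
  have hlog : |Real.log μ| ≤ ‖P‖ * |μ - 1| :=
    (Real.abs_log_le_max_mul_abs_sub_one hμ).trans (by gcongr)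
  calc Real.log μ ^ 2 ≤ (‖P‖ * (μ - 1)) ^ 2 := sq_le_sq.2 (by rwa [abs_mul, abs_norm])
    _ = ‖P‖ ^ 2 * (μ - 1) ^ 2 := mul_pow _ _ _

/-- **Logarithm bound for positive-definite symplectic matrices.**
For a symmetric positive-definite symplectic `P` with eigenvalues `λ₁, …, λ_{2m}`,
`Σ (ln λᵢ)² ≤ ‖P‖_∞² · Σ (λᵢ − 1)²`, i.e. `‖ln P‖₂ ≤ ‖P‖_∞ · ‖P − I‖₂`. -/
theorem log_bound_positive_symplectic
    (m : ℕ) (hm : 1 ≤ m)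
    (P : Matrix (Fin 2 × Fin m) (Fin 2 × Fin m) ℝ)
    (hPsymp : IsSymplectic P) (hPpos : P.PosDef) :
    ∑ i, (Real.log (hPpos.1.eigenvalues i)) ^ 2 ≤
      ‖P‖ ^ 2 * ∑ i, (hPpos.1.eigenvalues i - 1) ^ 2 :=
  log_bound_positive_symplectic_general m P hPsymp hPpos
end
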